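/- arXiv:1806.02735 — 6 statements merged into one kernel-verified Lean document; each statement's English description precedes it below -/
import Mathlib

section
/- Let n ≥ 3 be an integer and p > 3 a prime with p ≡ 1 (mod n), and set m = (p−1)/n. Then ∑_{k=0}^{p−1} C(m+k, m)^n · ∑_{j=1}^k 1/j ≡ ∑_{k=0}^{p−1} C(m+k, m)^n · ∑_{j=1}^{k+m} 1/j (mod p), where the congruence of the rational numbers is in the sense of p-adic valuation (both sides are p-integral and their difference has positive p-adic valuation). -/
/-!
The difference of the two sides is `-∑_{k<p} C(m+k,m)^n (H_{k+m} - H_k)`. For `k ≥ p - m`,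
`p` divides `C(m+k,m)` while `H_{k+m} - H_k` has at most a simple pole at `p`, so these terms
have norm at most `p^{1-n} ≤ p⁻¹`. For `k < p - m` all terms are `p`-integral, and modulo `p`
the substitution `k ↦ p - m - 1 - k` changes the sign of each term: `C(p-1-k, m) ≡ (-1)^m C(m+k, m)`,
`j ↦ p - j` negates the window `H_{k+m} - H_k`, and `(-1)^{mn} = (-1)^{p-1} = 1`. So this part
vanishes modulo `p`; clearing denominators with `(p-1)!` carries this from `ZMod p` to `ℚ_[p]`.
-/

open Finset

/-- `H_{k+m} - H_k`. -/
def harmonicWindow (F : Type*) [DivisionRing F] (m k : ℕ) : F :=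
  ∑ j ∈ Ico (k + 1) (k + m + 1), (j : F)⁻¹

lemma sum_Icc_one_div_add_harmonicWindow (F : Type*) [DivisionRing F] (m k : ℕ) :
    ∑ j ∈ Icc 1 (k + m), 1 / (j : F) = ∑ j ∈ Icc 1 k, 1 / (j : F) + harmonicWindow F m k := by
  simp only [harmonicWindow, one_div, ← Ico_add_one_right_eq_Icc]
  exact (sum_Ico_consecutive _ (by omega) (by omega)).symm

lemma harmonicWindow_reflect {F : Type*} [DivisionRing F] {N a k : ℕ} (m : ℕ)
    (hN : (N : F) = 0) (h : a + k + m + 1 = N) :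
    harmonicWindow F m a = -harmonicWindow F m k := by
  have hrefl := sum_Ico_reflect (fun j => (j : F)⁻¹) (k + 1) (n := N) (m := k + m + 1) (by omega)
  rw [show N + 1 - (k + m + 1) = a + 1 by omega, show N + 1 - (k + 1) = a + m + 1 by omega] at hrefl
  rw [harmonicWindow, ← hrefl, harmonicWindow, ← sum_neg_distrib]
  refine sum_congr rfl fun j hj => ?_
  rw [mem_Ico] at hj
  rw [Nat.cast_sub (by omega), hN, zero_sub, inv_neg]

lemma natCast_descFactorial_reflect {R : Type*} [CommRing R] {N a k : ℕ} (m : ℕ)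
    (hN : (N : R) = 0) (h : a + k + 1 = N) :
    (a.descFactorial m : R) = (-1) ^ m * ((k + m).descFactorial m : R) := by
  have ha : (a : R) = -((k + 1 : ℕ) : R) := by
    rw [eq_neg_iff_add_eq_zero, ← Nat.cast_add, ← hN, ← h]; ring_nf
  rw [← descPochhammer_eval_eq_descFactorial, ha, Nat.add_descFactorial_eq_ascFactorial,
    Nat.cast_ascFactorial]
  have := ascPochhammer_eval_neg_eq_descPochhammer (R := R) (-((k + 1 : ℕ) : R)) m
  rw [neg_neg] at this
  rw [this, ← mul_assoc, ← mul_pow, neg_one_mul, neg_neg, one_pow, one_mul]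

lemma sum_range_eq_zero_of_reflect_neg {R : Type*} [CommRing R] [NoZeroDivisors R]
    (h2 : (2 : R) ≠ 0) {f : ℕ → R} {r : ℕ} (hf : ∀ k < r, f (r - 1 - k) = -f k) :
    ∑ k ∈ range r, f k = 0 := by
  have h : ∑ k ∈ range r, f k = -∑ k ∈ range r, f k := calc
    _ = ∑ k ∈ range r, f (r - 1 - k) := (sum_range_reflect f r).symm
    _ = ∑ k ∈ range r, -f k := sum_congr rfl fun k hk => hf k (mem_range.1 hk)
    _ = _ := sum_neg_distrib _
  have : (2 : R) * ∑ k ∈ range r, f k = 0 := by linear_combination h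
  exact (mul_eq_zero.1 this).resolve_left h2

lemma natCast_choose_reflect {R : Type*} [CommRing R] [IsDomain R] {N a k : ℕ} (m : ℕ)
    (hN : (N : R) = 0) (h : a + k + 1 = N) (hm : (m.factorial : R) ≠ 0) :
    (a.choose m : R) = (-1) ^ m * ((k + m).choose m : R) := by
  have := natCast_descFactorial_reflect (R := R) m hN h
  simp only [Nat.descFactorial_eq_factorial_mul_choose, Nat.cast_mul] at this
  exact mul_left_cancel₀ hm (by linear_combination this)

def weightedWindowSum (F : Type*) [DivisionRing F] (n m r : ℕ) : F :=
  ∑ k ∈ range r, ((m + k).choose m : F) ^ n * harmonicWindow F m k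

lemma lt_of_sub_one_eq_mul {p m n : ℕ} (hp : 2 ≤ p) (h : p - 1 = m * n) : m < p := by
  have hn : 0 < n := Nat.pos_of_ne_zero (by rintro rfl; omega)
  have := Nat.le_mul_of_pos_right m hn
  omega

theorem weightedWindowSum_zmod_eq_zero {p n m : ℕ} [Fact p.Prime] (hp2 : p ≠ 2)
    (hm : p - 1 = m * n) : weightedWindowSum (ZMod p) n m (p - m) = 0 := by
  have hp := (Fact.out : p.Prime)
  have hmp := lt_of_sub_one_eq_mul hp.two_le hm
  have hfact : (m.factorial : ZMod p) ≠ 0 := by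
    rw [Ne, ZMod.natCast_eq_zero_iff, hp.dvd_factorial]; omega
  have heven : Even (m * n) := hm ▸ Nat.Odd.sub_odd (hp.odd_of_ne_two hp2) odd_one
  have h2 : (2 : ZMod p) ≠ 0 := Ring.two_ne_zero (by rwa [ZMod.ringChar_zmod_n])
  refine sum_range_eq_zero_of_reflect_neg h2 fun k hk => ?_
  rw [natCast_choose_reflect (N := p) (k := k) m (ZMod.natCast_self p) (by omega) hfact,
    harmonicWindow_reflect (N := p) (k := k) m (ZMod.natCast_self p) (by omega),
    mul_pow, ← pow_mul, heven.neg_one_pow, one_mul, mul_neg, add_comm k m]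

def weightedWindowNumerator (L n m r : ℕ) : ℕ :=
  ∑ k ∈ range r, ((m + k).choose m) ^ n * ∑ j ∈ Ico (k + 1) (k + m + 1), L / j

lemma natCast_weightedWindowNumerator (F : Type*) [Field F] {L n m r : ℕ}
    (hL : ∀ j, 0 < j → j < r + m → j ∣ L ∧ (j : F) ≠ 0) :
    (weightedWindowNumerator L n m r : F) = L * weightedWindowSum F n m r := by
  simp only [weightedWindowNumerator, weightedWindowSum, harmonicWindow, Nat.cast_sum,
    Nat.cast_mul, Nat.cast_pow, mul_sum]
  refine sum_congr rfl fun k hk => sum_congr rfl fun j hj => ?_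
  rw [mem_range] at hk
  rw [mem_Ico] at hj
  obtain ⟨hdvd, hj0⟩ := hL j (by omega) (by omega)
  rw [Nat.cast_div hdvd hj0]
  ring

section Padic

variable {p : ℕ} [Fact p.Prime]

lemma norm_natCast_le_inv_of_dvd {a : ℕ} (h : p ∣ a) : ‖(a : ℚ_[p])‖ ≤ (p : ℝ)⁻¹ := by
  have := (Padic.norm_int_le_pow_iff_dvd (p := p) a 1).2 (by exact_mod_cast pow_one p ▸ h)
  simpa using this

lemma norm_inv_natCast_eq_one {j : ℕ} (hj0 : 0 < j) (hjp : j < p) : ‖(j : ℚ_[p])⁻¹‖ = 1 := by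
  rw [norm_inv, Padic.norm_natCast_eq_one_iff.2 (Nat.coprime_of_lt_prime hj0.ne' hjp Fact.out),
    inv_one]

lemma norm_inv_natCast_le {j : ℕ} (hj : ¬ p ^ 2 ∣ j) : ‖(j : ℚ_[p])⁻¹‖ ≤ p := by
  have hp0 : (0 : ℝ) < p := by exact_mod_cast (Fact.out : p.Prime).pos
  have hlow : (p : ℝ) ^ (-1 : ℤ) ≤ ‖(j : ℚ_[p])‖ := by
    by_contra! hlt
    rw [show (-1 : ℤ) = -2 + 1 by norm_num, ← Padic.norm_le_pow_iff_norm_lt_pow_add_one] at hlt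
    exact hj (by exact_mod_cast (Padic.norm_int_le_pow_iff_dvd (p := p) j 2).1 (by simpa using hlt))
  rw [zpow_neg_one] at hlow
  rw [norm_inv]
  exact inv_le_of_inv_le₀ hp0 hlow

lemma norm_harmonic_le_one {k : ℕ} (hk : k < p) :
    ‖∑ j ∈ Icc 1 k, 1 / (j : ℚ_[p])‖ ≤ 1 := by
  refine IsUltrametricDist.norm_sum_le_of_forall_le_of_nonneg zero_le_one fun j hj => ?_
  rw [mem_Icc] at hj
  rw [one_div, norm_inv_natCast_eq_one (by omega) (by omega)]

lemma norm_sum_choose_pow_mul_harmonic_le_one (n m : ℕ) :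
    ‖∑ k ∈ range p, ((m + k).choose m : ℚ_[p]) ^ n * ∑ j ∈ Icc 1 k, 1 / (j : ℚ_[p])‖ ≤ 1 := by
  refine IsUltrametricDist.norm_sum_le_of_forall_le_of_nonneg zero_le_one fun k hk => ?_
  rw [norm_mul, norm_pow]
  exact mul_le_one₀ (pow_le_one₀ (norm_nonneg _) (IsUltrametricDist.norm_natCast_le_one _ _))
    (norm_nonneg _) (norm_harmonic_le_one (mem_range.1 hk))

lemma norm_weightedWindowSum_head_le {n m : ℕ} (hp2 : p ≠ 2) (hm : p - 1 = m * n) :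
    ‖weightedWindowSum ℚ_[p] n m (p - m)‖ ≤ (p : ℝ)⁻¹ := by
  have hp := (Fact.out : p.Prime)
  have hmp := lt_of_sub_one_eq_mul hp.two_le hm
  set L := (p - 1).factorial
  have hN := natCast_weightedWindowNumerator (ZMod p) (L := L) (n := n) (m := m) (r := p - m)
    fun j hj0 hj => ⟨Nat.dvd_factorial hj0 (by omega), by
      rw [Ne, ZMod.natCast_eq_zero_iff]; exact fun h => absurd (Nat.le_of_dvd hj0 h) (by omega)⟩
  rw [weightedWindowSum_zmod_eq_zero hp2 hm, mul_zero, ZMod.natCast_eq_zero_iff] at hN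
  have hQ := natCast_weightedWindowNumerator ℚ_[p] (L := L) (n := n) (m := m) (r := p - m)
    fun j hj0 hj => ⟨Nat.dvd_factorial hj0 (by omega), Nat.cast_ne_zero.2 hj0.ne'⟩
  have hL : ‖(L : ℚ_[p])‖ = 1 := Padic.norm_natCast_eq_one_iff.2
    (hp.coprime_iff_not_dvd.2 fun h => by rw [hp.dvd_factorial] at h; omega)
  calc ‖weightedWindowSum ℚ_[p] n m (p - m)‖
      = ‖(L : ℚ_[p]) * weightedWindowSum ℚ_[p] n m (p - m)‖ := by rw [norm_mul, hL, one_mul]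
    _ ≤ (p : ℝ)⁻¹ := hQ ▸ norm_natCast_le_inv_of_dvd hN

lemma norm_choose_pow_mul_harmonicWindow_le {n m k : ℕ} (hn : 2 ≤ n) (hmp : m < p) (hk : k < p)
    (hmk : p ≤ m + k) :
    ‖((m + k).choose m : ℚ_[p]) ^ n * harmonicWindow ℚ_[p] m k‖ ≤ (p : ℝ)⁻¹ := by
  have hp := (Fact.out : p.Prime)
  have hp1 : (1 : ℝ) ≤ p := by exact_mod_cast hp.one_le
  have hC : ‖((m + k).choose m : ℚ_[p])‖ ≤ (p : ℝ)⁻¹ :=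
    norm_natCast_le_inv_of_dvd (hp.dvd_choose_add hmp hk hmk)
  have hW : ‖harmonicWindow ℚ_[p] m k‖ ≤ p := by
    refine IsUltrametricDist.norm_sum_le_of_forall_le_of_nonneg (by positivity) fun j hj => ?_
    rw [mem_Ico] at hj
    refine norm_inv_natCast_le fun h => ?_
    have := Nat.le_of_dvd (by omega) h
    nlinarith [hp.two_le]
  calc ‖((m + k).choose m : ℚ_[p]) ^ n * harmonicWindow ℚ_[p] m k‖
      ≤ (p : ℝ)⁻¹ ^ 2 * p := by
        rw [norm_mul, norm_pow]
        refine mul_le_mul ((pow_le_pow_left₀ (norm_nonneg _) hC n).trans ?_) hW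
          (norm_nonneg _) (by positivity)
        exact pow_le_pow_of_le_one (by positivity) (inv_le_one_of_one_le₀ hp1) hn
    _ = (p : ℝ)⁻¹ := by field_simp

theorem norm_weightedWindowSum_le {n m : ℕ} (hn : 2 ≤ n) (hm : p - 1 = m * n) :
    ‖weightedWindowSum ℚ_[p] n m p‖ ≤ (p : ℝ)⁻¹ := by
  have hp := (Fact.out : p.Prime)
  have hmp := lt_of_sub_one_eq_mul hp.two_le hm
  have hp2 : p ≠ 2 := by
    rintro rfl
    have := Nat.eq_one_of_mul_eq_one_left hm.symm
    omega
  rw [weightedWindowSum, ← sum_range_add_sum_Ico _ (Nat.sub_le p m)]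
  refine (IsUltrametricDist.norm_add_le_max _ _).trans (max_le ?_ ?_)
  · exact norm_weightedWindowSum_head_le hp2 hm
  · refine IsUltrametricDist.norm_sum_le_of_forall_le_of_nonneg (by positivity) fun k hk => ?_
    rw [mem_Ico] at hk
    exact norm_choose_pow_mul_harmonicWindow_le hn hmp hk.2 (by omega)

end Padic

theorem harmonic_congruence_mod_p_general (n p m : ℕ) [Fact p.Prime]
    (hn : 3 ≤ n) (hm : p - 1 = m * n) :
    ‖((∑ k ∈ Finset.range p, (Nat.choose (m + k) m : ℚ) ^ n *
        ∑ j ∈ Finset.Icc 1 k, (1 : ℚ) / j : ℚ) : ℚ_[p])‖ ≤ 1 ∧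
    ‖((∑ k ∈ Finset.range p, (Nat.choose (m + k) m : ℚ) ^ n *
        ∑ j ∈ Finset.Icc 1 (k + m), (1 : ℚ) / j : ℚ) : ℚ_[p])‖ ≤ 1 ∧
    ‖((∑ k ∈ Finset.range p, (Nat.choose (m + k) m : ℚ) ^ n *
        ∑ j ∈ Finset.Icc 1 k, (1 : ℚ) / j : ℚ) : ℚ_[p]) -
      ((∑ k ∈ Finset.range p, (Nat.choose (m + k) m : ℚ) ^ n *
        ∑ j ∈ Finset.Icc 1 (k + m), (1 : ℚ) / j : ℚ) : ℚ_[p])‖ ≤ (p : ℝ) ^ (-1 : ℤ) := by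
  push_cast
  set A := ∑ k ∈ range p, ((m + k).choose m : ℚ_[p]) ^ n * ∑ j ∈ Icc 1 k, 1 / (j : ℚ_[p])
  set B := ∑ k ∈ range p, ((m + k).choose m : ℚ_[p]) ^ n * ∑ j ∈ Icc 1 (k + m), 1 / (j : ℚ_[p])
  have hAB : A - B = -weightedWindowSum ℚ_[p] n m p := by
    simp only [A, B, weightedWindowSum, sum_Icc_one_div_add_harmonicWindow, mul_add,
      sum_add_distrib]
    ring
  have hA : ‖A‖ ≤ 1 := norm_sum_choose_pow_mul_harmonic_le_one n m
  have hD : ‖A - B‖ ≤ (p : ℝ)⁻¹ := by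
    rw [hAB, norm_neg]
    exact norm_weightedWindowSum_le (by omega) hm
  have hp1 : (p : ℝ)⁻¹ ≤ 1 := inv_le_one_of_one_le₀ (by exact_mod_cast (Fact.out : p.Prime).one_le)
  refine ⟨hA, ?_, by rwa [zpow_neg_one]⟩
  calc ‖B‖ = ‖-(A - B) + A‖ := by rw [neg_sub, sub_add_cancel]
    _ ≤ max ‖-(A - B)‖ ‖A‖ := IsUltrametricDist.norm_add_le_max _ _
    _ ≤ 1 := by rw [norm_neg]; exact max_le (hD.trans hp1) hA

/-- harmonic-sum congruence modulo `p` for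
`∑_{k=0}^{p-1} C(m+k,m)^n ∑_{j=1}^k 1/j`. Both sides are `p`-integral and
their difference has positive `p`-adic valuation. -/
theorem harmonic_congruence_mod_p (n p m : ℕ) [Fact p.Prime]
    (hn : 3 ≤ n) (hp : 3 < p) (hpn : p ≡ 1 [MOD n]) (hm : p - 1 = m * n) :
    ‖((∑ k ∈ Finset.range p, (Nat.choose (m + k) m : ℚ) ^ n *
        ∑ j ∈ Finset.Icc 1 k, (1 : ℚ) / j : ℚ) : ℚ_[p])‖ ≤ 1 ∧
    ‖((∑ k ∈ Finset.range p, (Nat.choose (m + k) m : ℚ) ^ n *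
        ∑ j ∈ Finset.Icc 1 (k + m), (1 : ℚ) / j : ℚ) : ℚ_[p])‖ ≤ 1 ∧
    ‖((∑ k ∈ Finset.range p, (Nat.choose (m + k) m : ℚ) ^ n *
        ∑ j ∈ Finset.Icc 1 k, (1 : ℚ) / j : ℚ) : ℚ_[p]) -
      ((∑ k ∈ Finset.range p, (Nat.choose (m + k) m : ℚ) ^ n *
        ∑ j ∈ Finset.Icc 1 (k + m), (1 : ℚ) / j : ℚ) : ℚ_[p])‖ ≤ (p : ℝ) ^ (-1 : ℤ) :=
  harmonic_congruence_mod_p_general n p m hn hm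
end

section
/- Let n ≥ 3 be an integer and p > 3 a prime with p ≡ 1 (mod n), and set m = (p−1)/n. Then ∑_{k=0}^{p−1} C(m+k, m)^n · (∑_{j=1}^k 1/j)² ≡ ∑_{k=0}^{p−1} C(m+k, m)^n · (∑_{j=1}^{k+m} 1/j)² (mod p), as a congruence between p-integral rationals. -/
/-!
Split both sums at `k = p - m`. For `k ≥ p - m` the coefficient `C(m+k, m)` is divisible by `p`,
while `H_N` has `p`-adic norm at most `p` for `N < 2p`; as `n ≥ 3` these terms are `0` mod `p`.
The remaining terms are `p`-integral and can be compared in `𝔽_p`, where `H_{p-1} = 0` gives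
`H_{p-1-j} = H_j`, and `C(p-1-k, m) = (-1)^m C(m+k, m)` with `(-1)^(mn) = 1` because
`mn = p - 1` is even. Reversing the order of summation `k ↦ p-m-1-k` then carries one sum
onto the other.
-/

open Finset

def harmonicSum (K : Type*) [DivisionRing K] (N : ℕ) : K :=
  ∑ i ∈ range N, ((i + 1 : ℕ) : K)⁻¹

lemma harmonicSum_succ {K : Type*} [DivisionRing K] (N : ℕ) :
    harmonicSum K (N + 1) = harmonicSum K N + ((N + 1 : ℕ) : K)⁻¹ :=
  sum_range_succ _ N

lemma Rat.cast_harmonic {K : Type*} [DivisionRing K] [CharZero K] (N : ℕ) :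
    (harmonic N : K) = harmonicSum K N := by
  simp [harmonic, harmonicSum]

lemma Nat.cast_descFactorial_of_add_eq_zero {R : Type*} [CommRing R] {a k : ℕ}
    (h : ((a + k + 1 : ℕ) : R) = 0) (m : ℕ) :
    (a.descFactorial m : R) = (-1) ^ m * ((k + 1).ascFactorial m : R) := by
  have ha : (a : R) = -((k + 1 : ℕ) : R) := by push_cast at h ⊢; linear_combination h
  have hasc := ascPochhammer_eval_neg_eq_descPochhammer R (-((k + 1 : ℕ) : R)) m
  rw [neg_neg, ← Nat.cast_ascFactorial] at hasc
  rw [← descPochhammer_eval_eq_descFactorial, ha, hasc, ← mul_assoc, ← mul_pow]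
  simp

section CharP

variable {K : Type*} [Field K] {p : ℕ} [CharP K p]

lemma CharP.natCast_sub_eq_neg {a : ℕ} (ha : a ≤ p) : ((p - a : ℕ) : K) = -a := by
  rw [Nat.cast_sub ha, CharP.cast_eq_zero, zero_sub]

lemma harmonicSum_pred_eq_zero (hp : p ≠ 2) : harmonicSum K (p - 1) = 0 := by
  have hneg : harmonicSum K (p - 1) = -harmonicSum K (p - 1) := by
    calc harmonicSum K (p - 1) = ∑ i ∈ range (p - 1), ((p - 1 - 1 - i + 1 : ℕ) : K)⁻¹ :=
          (sum_range_reflect _ _).symm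
      _ = -harmonicSum K (p - 1) := by
          rw [harmonicSum, ← sum_neg_distrib]
          refine sum_congr rfl fun i hi => ?_
          rw [mem_range] at hi
          rw [show p - 1 - 1 - i + 1 = p - (i + 1) by omega, CharP.natCast_sub_eq_neg (by omega),
            inv_neg]
  have h2 : (2 : K) ≠ 0 := Ring.two_ne_zero (by rwa [ringChar.eq K p])
  have : (2 : K) * harmonicSum K (p - 1) = 0 := by linear_combination hneg
  exact (mul_eq_zero.mp this).resolve_left h2

lemma harmonicSum_sub_one_sub (hp : p ≠ 2) {j : ℕ} (hj : j < p) :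
    harmonicSum K (p - 1 - j) = harmonicSum K j := by
  induction j with
  | zero => rw [Nat.sub_zero, harmonicSum_pred_eq_zero hp, harmonicSum, sum_range_zero]
  | succ j ih =>
    have h := harmonicSum_succ (K := K) (p - 1 - (j + 1))
    rw [show p - 1 - (j + 1) + 1 = p - (j + 1) by omega, CharP.natCast_sub_eq_neg (by omega),
      show p - (j + 1) = p - 1 - j by omega, ih (by omega), inv_neg] at h
    rw [harmonicSum_succ]
    linear_combination -h

variable [Fact p.Prime]

lemma choose_sub_one_sub {m k : ℕ} (h : m + k < p) :
    ((p - 1 - k).choose m : K) = (-1) ^ m * ((m + k).choose m : K) := by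
  have hfac : (m.factorial : K) ≠ 0 := by
    rw [Ne, CharP.cast_eq_zero_iff K p, (Fact.out : p.Prime).dvd_factorial]
    omega
  have hdesc := Nat.cast_descFactorial_of_add_eq_zero (R := K) (a := p - 1 - k) (k := k)
    (by rw [show p - 1 - k + k + 1 = p by omega, CharP.cast_eq_zero]) m
  rw [← Nat.add_descFactorial_eq_ascFactorial, add_comm k m,
    Nat.descFactorial_eq_factorial_mul_choose, Nat.descFactorial_eq_factorial_mul_choose] at hdesc
  push_cast at hdesc
  exact mul_left_cancel₀ hfac (by rw [hdesc]; ring)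

lemma sum_range_choose_pow_mul_harmonicSum_sq_shift (hp : p ≠ 2) {m n : ℕ}
    (hmn : Even (m * n)) :
    ∑ k ∈ range (p - m), ((m + k).choose m : K) ^ n * harmonicSum K k ^ 2 =
      ∑ k ∈ range (p - m), ((m + k).choose m : K) ^ n * harmonicSum K (k + m) ^ 2 := by
  rw [← sum_range_reflect]
  refine sum_congr rfl fun k hk => ?_
  rw [mem_range] at hk
  rw [show m + (p - m - 1 - k) = p - 1 - k by omega,
    show p - m - 1 - k = p - 1 - (k + m) by omega, choose_sub_one_sub (by omega),
    harmonicSum_sub_one_sub hp (by omega), mul_pow, ← pow_mul, hmn.neg_one_pow, one_mul,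
    add_comm m k]

end CharP

namespace PadicInt

variable {p : ℕ} [Fact p.Prime]

lemma coe_inv_of_norm_eq_one {z : ℤ_[p]} (hz : ‖z‖ = 1) : (z.inv : ℚ_[p]) = (z : ℚ_[p])⁻¹ :=
  eq_inv_of_mul_eq_one_right (by rw [← coe_mul, mul_inv hz, coe_one])

lemma toZMod_inv (z : ℤ_[p]) : toZMod z.inv = (toZMod z)⁻¹ := by
  by_cases hz : ‖z‖ = 1
  · exact eq_inv_of_mul_eq_one_right (by rw [← map_mul, mul_inv hz, map_one])
  · have hz0 : toZMod z = 0 := by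
      rw [← RingHom.mem_ker, ker_toZMod, IsLocalRing.mem_maximalIdeal, mem_nonunits]
      exact lt_of_le_of_ne (norm_le_one z) hz
    obtain ⟨k, hk⟩ := z
    have : PadicInt.inv ⟨k, hk⟩ = 0 := dif_neg hz
    rw [this, hz0, map_zero, inv_zero]

lemma norm_sub_le_inv_of_toZMod_eq {x y : ℤ_[p]} (h : toZMod x = toZMod y) :
    ‖(x : ℚ_[p]) - y‖ ≤ (p : ℝ)⁻¹ := by
  have hlt : ‖x - y‖ < 1 := by
    rw [← mem_nonunits, ← IsLocalRing.mem_maximalIdeal, ← ker_toZMod, RingHom.mem_ker, map_sub,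
      h, sub_self]
  have hle := (norm_le_pow_iff_norm_lt_pow_add_one (x - y) (-1)).mpr (by simpa using hlt)
  rw [zpow_neg_one] at hle
  exact hle

end PadicInt

namespace Padic

variable {p : ℕ} [Fact p.Prime]

lemma norm_natCast_eq_one_of_not_dvd {a : ℕ} (h : ¬p ∣ a) : ‖(a : ℚ_[p])‖ = 1 :=
  norm_natCast_eq_one_iff.mpr ((Nat.Prime.coprime_iff_not_dvd Fact.out).mpr h)

lemma norm_natCast_le_inv_of_dvd {a : ℕ} (h : p ∣ a) : ‖(a : ℚ_[p])‖ ≤ (p : ℝ)⁻¹ := by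
  simpa using (norm_int_le_pow_iff_dvd (p := p) a 1).mpr (by rw [pow_one]; exact_mod_cast h)

/-- `PadicInt.inv` is `0` off the units, so this lifts `harmonicSum ℚ_[p] N` only for `N < p`. -/
noncomputable def harmonicInt (p : ℕ) [Fact p.Prime] (N : ℕ) : ℤ_[p] :=
  ∑ i ∈ range N, ((i + 1 : ℕ) : ℤ_[p]).inv

lemma toZMod_harmonicInt (N : ℕ) :
    PadicInt.toZMod (harmonicInt p N) = harmonicSum (ZMod p) N := by
  simp [harmonicInt, harmonicSum, PadicInt.toZMod_inv]

lemma coe_harmonicInt {N : ℕ} (hN : N < p) :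
    (harmonicInt p N : ℚ_[p]) = harmonicSum ℚ_[p] N := by
  rw [harmonicInt, PadicInt.coe_sum, harmonicSum]
  refine sum_congr rfl fun i hi => ?_
  rw [mem_range] at hi
  have hnorm : ‖((i + 1 : ℕ) : ℤ_[p])‖ = 1 := by
    rw [PadicInt.norm_def, PadicInt.coe_natCast]
    exact norm_natCast_eq_one_of_not_dvd (Nat.not_dvd_of_pos_of_lt (by omega) (by omega))
  rw [PadicInt.coe_inv_of_norm_eq_one hnorm, PadicInt.coe_natCast]

lemma norm_harmonicSum_le {N : ℕ} (hN : N < 2 * p) : ‖harmonicSum ℚ_[p] N‖ ≤ p := by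
  refine IsUltrametricDist.norm_sum_le_of_forall_le_of_nonneg (by positivity) fun i hi => ?_
  rw [mem_range] at hi
  rw [norm_inv]
  by_cases hip : i + 1 = p
  · rw [hip, norm_p, inv_inv]
  · have hndvd : ¬p ∣ i + 1 := fun ⟨c, hc⟩ => by
      rcases c with _ | _ | c <;> [omega; omega; nlinarith]
    rw [norm_natCast_eq_one_of_not_dvd hndvd, inv_one]
    exact_mod_cast (Fact.out : p.Prime).one_lt.le

lemma norm_choose_pow_mul_harmonicSum_sq_le {m k n N : ℕ} (hn : 3 ≤ n) (hm : m < p) (hk : k < p)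
    (hmk : p ≤ m + k) (hN : N < 2 * p) :
    ‖((m + k).choose m : ℚ_[p]) ^ n * harmonicSum ℚ_[p] N ^ 2‖ ≤ (p : ℝ)⁻¹ := by
  have hp : (1 : ℝ) < p := by exact_mod_cast (Fact.out : p.Prime).one_lt
  have hc := norm_natCast_le_inv_of_dvd ((Fact.out : p.Prime).dvd_choose_add hm hk hmk)
  calc ‖((m + k).choose m : ℚ_[p]) ^ n * harmonicSum ℚ_[p] N ^ 2‖
      = ‖((m + k).choose m : ℚ_[p])‖ ^ n * ‖harmonicSum ℚ_[p] N‖ ^ 2 := by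
        rw [norm_mul, norm_pow, norm_pow]
    _ ≤ ((p : ℝ)⁻¹) ^ n * (p : ℝ) ^ 2 := by gcongr; exact norm_harmonicSum_le hN
    _ ≤ ((p : ℝ)⁻¹) ^ 3 * (p : ℝ) ^ 2 := by
        gcongr ?_ * _
        exact pow_le_pow_of_le_one (by positivity) (inv_le_one_of_one_le₀ hp.le) hn
    _ = (p : ℝ)⁻¹ := by field_simp

lemma exists_padicInt_sum_choose_pow_mul_harmonicSum_sq (s : Finset ℕ) (c g : ℕ → ℕ) (n : ℕ)
    (hg : ∀ k ∈ s, g k < p) :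
    ∃ z : ℤ_[p], (z : ℚ_[p]) = ∑ k ∈ s, (c k : ℚ_[p]) ^ n * harmonicSum ℚ_[p] (g k) ^ 2 ∧
      PadicInt.toZMod z = ∑ k ∈ s, (c k : ZMod p) ^ n * harmonicSum (ZMod p) (g k) ^ 2 := by
  refine ⟨∑ k ∈ s, (c k : ℤ_[p]) ^ n * harmonicInt p (g k) ^ 2, ?_, ?_⟩
  · rw [PadicInt.coe_sum]
    refine sum_congr rfl fun k hk => ?_
    push_cast
    rw [coe_harmonicInt (hg k hk)]
  · simp [toZMod_harmonicInt]

lemma norm_coe_add_le_one (z : ℤ_[p]) {t : ℚ_[p]} (ht : ‖t‖ ≤ (p : ℝ)⁻¹) :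
    ‖(z : ℚ_[p]) + t‖ ≤ 1 :=
  (IsUltrametricDist.norm_add_le_max _ _).trans <| max_le (PadicInt.norm_le_one z) <|
    ht.trans (inv_le_one_of_one_le₀ (by exact_mod_cast (Fact.out : p.Prime).one_lt.le))

lemma norm_coe_add_sub_coe_add_le {z₁ z₂ : ℤ_[p]} {t₁ t₂ : ℚ_[p]}
    (h : PadicInt.toZMod z₁ = PadicInt.toZMod z₂) (ht₁ : ‖t₁‖ ≤ (p : ℝ)⁻¹)
    (ht₂ : ‖t₂‖ ≤ (p : ℝ)⁻¹) :
    ‖((z₁ : ℚ_[p]) + t₁) - ((z₂ : ℚ_[p]) + t₂)‖ ≤ (p : ℝ)⁻¹ := by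
  rw [add_sub_add_comm, sub_eq_add_neg t₁]
  refine (IsUltrametricDist.norm_add_le_max _ _).trans <|
    max_le (PadicInt.norm_sub_le_inv_of_toZMod_eq h) ?_
  exact (IsUltrametricDist.norm_add_le_max _ _).trans (max_le ht₁ (by rwa [norm_neg]))

lemma norm_sum_Ico_choose_pow_mul_harmonicSum_sq_le {m n : ℕ} (hn : 3 ≤ n) (hm : m < p)
    (g : ℕ → ℕ) (hg : ∀ k, g k ≤ k + m) :
    ‖∑ k ∈ Ico (p - m) p, ((m + k).choose m : ℚ_[p]) ^ n * harmonicSum ℚ_[p] (g k) ^ 2‖ ≤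
      (p : ℝ)⁻¹ :=
  IsUltrametricDist.norm_sum_le_of_forall_le_of_nonneg (by positivity) fun k hk => by
    rw [mem_Ico] at hk
    exact norm_choose_pow_mul_harmonicSum_sq_le hn hm hk.2 (by omega) (by have := hg k; omega)

end Padic

theorem harmonic_square_congruence_mod_p_general (n p m : ℕ) [Fact p.Prime]
    (hn : 3 ≤ n) (hp : 3 < p) (hm : p - 1 = m * n) :
    ‖((∑ k ∈ Finset.range p, (Nat.choose (m + k) m : ℚ) ^ n *
        (∑ j ∈ Finset.Icc 1 k, (1 : ℚ) / j) ^ 2 : ℚ) : ℚ_[p])‖ ≤ 1 ∧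
    ‖((∑ k ∈ Finset.range p, (Nat.choose (m + k) m : ℚ) ^ n *
        (∑ j ∈ Finset.Icc 1 (k + m), (1 : ℚ) / j) ^ 2 : ℚ) : ℚ_[p])‖ ≤ 1 ∧
    ‖((∑ k ∈ Finset.range p, (Nat.choose (m + k) m : ℚ) ^ n *
        (∑ j ∈ Finset.Icc 1 k, (1 : ℚ) / j) ^ 2 : ℚ) : ℚ_[p]) -
      ((∑ k ∈ Finset.range p, (Nat.choose (m + k) m : ℚ) ^ n *
        (∑ j ∈ Finset.Icc 1 (k + m), (1 : ℚ) / j) ^ 2 : ℚ) : ℚ_[p])‖ ≤ (p : ℝ) ^ (-1 : ℤ) := by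
  have hm₀ : 0 < m := Nat.pos_of_ne_zero (by rintro rfl; omega)
  have hmp : m < p := by
    have : m ≤ m * n := Nat.le_mul_of_pos_right m (by omega)
    omega
  have hmn : Even (m * n) := by
    rw [← hm]
    exact Nat.Odd.sub_odd ((Fact.out : p.Prime).odd_of_ne_two (by omega)) odd_one
  simp only [one_div, ← harmonic_eq_sum_Icc]
  push_cast [Rat.cast_harmonic]
  rw [zpow_neg_one, ← sum_range_add_sum_Ico _ (Nat.sub_le p m),
    ← sum_range_add_sum_Ico _ (Nat.sub_le p m)]
  obtain ⟨z₁, hz₁, hr₁⟩ := Padic.exists_padicInt_sum_choose_pow_mul_harmonicSum_sq (p := p)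
    (range (p - m)) (fun k => (m + k).choose m) (fun k => k) n fun k hk => by simp at hk; omega
  obtain ⟨z₂, hz₂, hr₂⟩ := Padic.exists_padicInt_sum_choose_pow_mul_harmonicSum_sq (p := p)
    (range (p - m)) (fun k => (m + k).choose m) (· + m) n fun k hk => by simp at hk; omega
  have ht₁ := Padic.norm_sum_Ico_choose_pow_mul_harmonicSum_sq_le hn hmp (fun k => k) (by simp)
  have ht₂ := Padic.norm_sum_Ico_choose_pow_mul_harmonicSum_sq_le hn hmp (· + m) fun _ => le_rfl
  have hr : PadicInt.toZMod z₁ = PadicInt.toZMod z₂ := by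
    rw [hr₁, hr₂]
    exact sum_range_choose_pow_mul_harmonicSum_sq_shift (by omega) hmn
  rw [← hz₁, ← hz₂]
  exact ⟨Padic.norm_coe_add_le_one z₁ ht₁, Padic.norm_coe_add_le_one z₂ ht₂,
    Padic.norm_coe_add_sub_coe_add_le hr ht₁ ht₂⟩

/-- squared harmonic-sum congruence modulo `p` for
`∑_{k=0}^{p-1} C(m+k,m)^n (∑_{j=1}^k 1/j)²`. -/
theorem harmonic_square_congruence_mod_p (n p m : ℕ) [Fact p.Prime]
    (hn : 3 ≤ n) (hp : 3 < p) (hpn : p ≡ 1 [MOD n]) (hm : p - 1 = m * n) :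
    ‖((∑ k ∈ Finset.range p, (Nat.choose (m + k) m : ℚ) ^ n *
        (∑ j ∈ Finset.Icc 1 k, (1 : ℚ) / j) ^ 2 : ℚ) : ℚ_[p])‖ ≤ 1 ∧
    ‖((∑ k ∈ Finset.range p, (Nat.choose (m + k) m : ℚ) ^ n *
        (∑ j ∈ Finset.Icc 1 (k + m), (1 : ℚ) / j) ^ 2 : ℚ) : ℚ_[p])‖ ≤ 1 ∧
    ‖((∑ k ∈ Finset.range p, (Nat.choose (m + k) m : ℚ) ^ n *
        (∑ j ∈ Finset.Icc 1 k, (1 : ℚ) / j) ^ 2 : ℚ) : ℚ_[p]) -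
      ((∑ k ∈ Finset.range p, (Nat.choose (m + k) m : ℚ) ^ n *
        (∑ j ∈ Finset.Icc 1 (k + m), (1 : ℚ) / j) ^ 2 : ℚ) : ℚ_[p])‖ ≤ (p : ℝ) ^ (-1 : ℤ) :=
  harmonic_square_congruence_mod_p_general n p m hn hp hm
end

section
/- Let n ≥ 3 be an integer and p > 3 a prime with p ≡ 1 (mod n), and set m = (p−1)/n. Then ∑_{k=0}^{p−1} C(m+k, m)^n · ∑_{j=1}^k 1/j² ≡ −∑_{k=0}^{p−1} C(m+k, m)^n · ∑_{j=1}^{k+m} 1/j² (mod p), as a congruence between p-integral rationals. -/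
/-!
Write `H_t = ∑_{j=1}^t 1/j²` and `T_k = C(m+k, m)^n (H_k + H_{k+m})`, so that the claim is
`∑_{k<p} T_k ≡ 0 (mod p)`. For `k ≥ p - m` we have `p ∣ C(m+k, m)`, while `p²` is the only
denominator of `H_{k+m}` divisible by `p`; as `n ≥ 3`, these `T_k` are `≡ 0`. The other `T_k` are
`p`-integral and reduce in `𝔽_p`, where `C(p-1-k, m) = (-1)^m C(m+k, m)`,
`(-1)^{mn} = (-1)^{p-1} = 1`, and `H_{p-1-t} = -H_t` because `H_{p-1} = ∑_{x ∈ 𝔽_p^×} x² = 0`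
for `p > 3`. So the reflection `k ↦ p-m-1-k` negates `T_k` in `𝔽_p`, and the sum vanishes as
`p` is odd.
-/

open Finset

/-- `Ring.inverse` rather than `⁻¹`, so that `H_t` also makes sense in `ℤ_[p]` and maps to `𝔽_p`. -/
noncomputable def harmonicSq (R : Type*) [Semiring R] (t : ℕ) : R :=
  ∑ j ∈ Icc 1 t, Ring.inverse ((j : R) ^ 2)

section HarmonicSq

variable {R K : Type*}

lemma harmonicSq_succ [Semiring R] (t : ℕ) :
    harmonicSq R (t + 1) = harmonicSq R t + Ring.inverse (((t + 1 : ℕ) : R) ^ 2) :=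
  sum_Icc_succ_top (by omega) _

lemma harmonicSq_eq_sum_one_div [DivisionRing K] (t : ℕ) :
    harmonicSq K t = ∑ j ∈ Icc 1 t, 1 / (j : K) ^ 2 := by
  simp [harmonicSq, Ring.inverse_eq_inv]

lemma map_ringInverse_of_isUnit [Semiring R] [DivisionRing K] (f : R →+* K) {x : R}
    (hx : IsUnit x) : f (Ring.inverse x) = Ring.inverse (f x) := by
  rw [Ring.inverse_eq_inv]
  refine eq_inv_of_mul_eq_one_right ?_
  rw [← map_mul, Ring.mul_inverse_cancel x hx, map_one]

lemma map_harmonicSq [Semiring R] [DivisionRing K] (f : R →+* K) {t : ℕ}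
    (h : ∀ j ∈ Icc 1 t, IsUnit (j : R)) : f (harmonicSq R t) = harmonicSq K t := by
  rw [harmonicSq, map_sum]
  refine sum_congr rfl fun j hj => ?_
  rw [map_ringInverse_of_isUnit f ((h j hj).pow 2), map_pow, map_natCast]

/-- Pairing `j` with `p - j ≡ -j`. -/
lemma harmonicSq_sub_add_harmonicSq [CommRing R] (p : ℕ) [CharP R p] {t : ℕ} (ht : t < p) :
    harmonicSq R (p - 1 - t) + harmonicSq R t = harmonicSq R (p - 1) := by
  induction t with
  | zero => simp [harmonicSq]
  | succ t ih =>
    have hpt : p - 1 - t = (p - 1 - (t + 1)) + 1 := by omega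
    have hcast : (((p - 1 - (t + 1) + 1 : ℕ) : R)) ^ 2 = ((t + 1 : ℕ) : R) ^ 2 := by
      rw [← hpt, Nat.cast_sub (by omega), Nat.cast_sub (by omega), CharP.cast_eq_zero R p]
      push_cast; ring
    rw [← ih (by omega), hpt, harmonicSq_succ, harmonicSq_succ, hcast]
    abel

end HarmonicSq

lemma Finset.sum_range_eq_zero_of_reflect_eq_neg {R : Type*} [Ring R] [NoZeroDivisors R]
    (h2 : (2 : R) ≠ 0) {N : ℕ} {f : ℕ → R} (hf : ∀ k < N, f (N - 1 - k) = -f k) :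
    ∑ k ∈ range N, f k = 0 := by
  have hneg : ∑ k ∈ range N, f k = -∑ k ∈ range N, f k := by
    calc ∑ k ∈ range N, f k = ∑ k ∈ range N, f (N - 1 - k) := (sum_range_reflect f N).symm
      _ = -∑ k ∈ range N, f k := by
        rw [← sum_neg_distrib]; exact sum_congr rfl fun k hk => hf k (mem_range.mp hk)
  have : (2 : R) * ∑ k ∈ range N, f k = 0 := by
    rw [two_mul]; nth_rewrite 2 [hneg]; exact add_neg_cancel _
  exact (mul_eq_zero.mp this).resolve_left h2

lemma cast_descFactorial_reflect {R : Type*} [CommRing R] (p : ℕ) [CharP R p] {k : ℕ}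
    (hk : k < p) (m : ℕ) :
    ((p - 1 - k).descFactorial m : R) = (-1) ^ m * ((m + k).descFactorial m : R) := by
  rw [← descPochhammer_eval_eq_descFactorial, descPochhammer_eval_eq_ascPochhammer,
    ← descPochhammer_eval_eq_descFactorial, ← ascPochhammer_eval_neg_eq_descPochhammer]
  congr 1
  rw [Nat.cast_sub (by omega), Nat.cast_sub (by omega), CharP.cast_eq_zero R p]
  push_cast; ring

noncomputable def binomHarmonicTerm (R : Type*) [Semiring R] (m n k : ℕ) : R :=
  ((m + k).choose m : R) ^ n * (harmonicSq R k + harmonicSq R (k + m))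

section ZMod

variable {p : ℕ} [Fact p.Prime]

lemma sum_range_natCast_zmod {M : Type*} [AddCommMonoid M] (f : ZMod p → M) :
    ∑ j ∈ range p, f j = ∑ x : ZMod p, f x :=
  sum_nbij' (fun j => (j : ZMod p)) ZMod.val (fun _ _ => mem_univ _)
    (fun x _ => mem_range.mpr (ZMod.val_lt x)) (fun _ hj => ZMod.val_cast_of_lt (mem_range.mp hj))
    (fun x _ => ZMod.natCast_zmod_val x) (fun _ _ => rfl)

/-- The sum of `x⁻²` over `𝔽_p` equals that of `x²`, which vanishes once `p - 1 ∤ 2`. -/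
lemma harmonicSq_zmod_pred (hp : 3 < p) : harmonicSq (ZMod p) (p - 1) = 0 := by
  have hrange : range p = insert 0 (Icc 1 (p - 1)) := by
    ext j; simp only [mem_range, mem_insert, mem_Icc]; omega
  calc harmonicSq (ZMod p) (p - 1) = ∑ j ∈ range p, ((j : ZMod p) ^ 2)⁻¹ := by
        simp [hrange, harmonicSq, Ring.inverse_eq_inv]
    _ = ∑ x : ZMod p, (x⁻¹) ^ 2 := by rw [sum_range_natCast_zmod (fun x => (x ^ 2)⁻¹)]; simp
    _ = ∑ x : ZMod p, x ^ 2 :=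
        Fintype.sum_bijective _ inv_involutive.bijective _ _ fun _ => rfl
    _ = 0 := FiniteField.sum_pow_lt_card_sub_one (K := ZMod p) 2 (by rw [ZMod.card]; omega)

lemma harmonicSq_zmod_reflect (hp : 3 < p) {t : ℕ} (ht : t < p) :
    harmonicSq (ZMod p) (p - 1 - t) = -harmonicSq (ZMod p) t := by
  rw [eq_neg_iff_add_eq_zero, harmonicSq_sub_add_harmonicSq p ht, harmonicSq_zmod_pred hp]

lemma cast_choose_reflect {m k : ℕ} (hmk : m + k < p) :
    ((p - 1 - k).choose m : ZMod p) = (-1) ^ m * ((m + k).choose m : ZMod p) := by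
  have hm : (m.factorial : ZMod p) ≠ 0 := by
    rw [Ne, ZMod.natCast_eq_zero_iff, Nat.Prime.dvd_factorial Fact.out]; omega
  apply mul_left_cancel₀ hm
  have := cast_descFactorial_reflect (R := ZMod p) p (k := k) (by omega) m
  simp only [Nat.descFactorial_eq_factorial_mul_choose, Nat.cast_mul] at this
  rw [this]; ring

lemma cast_choose_pow_reflect {m n k : ℕ} (hmk : m + k < p) (hmn : p - 1 = m * n) :
    ((p - 1 - k).choose m : ZMod p) ^ n = ((m + k).choose m : ZMod p) ^ n := by
  rw [cast_choose_reflect hmk, mul_pow, ← pow_mul, ← hmn,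
    ZMod.pow_card_sub_one_eq_one (neg_ne_zero.mpr one_ne_zero), one_mul]

/-- The reflection `k ↦ p - m - 1 - k` negates each term. -/
lemma sum_binomHarmonicTerm_zmod (hp : 3 < p) {m n : ℕ} (hmn : p - 1 = m * n) :
    ∑ k ∈ range (p - m), binomHarmonicTerm (ZMod p) m n k = 0 := by
  have h2 : (2 : ZMod p) ≠ 0 := by
    simpa using (ZMod.natCast_eq_zero_iff 2 p).not.mpr
      (Nat.not_dvd_of_pos_of_lt two_pos (by omega))
  refine sum_range_eq_zero_of_reflect_eq_neg h2 fun k hk => ?_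
  have e1 : m + (p - m - 1 - k) = p - 1 - k := by omega
  have e2 : p - m - 1 - k = p - 1 - (k + m) := by omega
  have e3 : p - 1 - (k + m) + m = p - 1 - k := by omega
  rw [binomHarmonicTerm, binomHarmonicTerm, e1, e2, e3, cast_choose_pow_reflect (by omega) hmn,
    harmonicSq_zmod_reflect hp (by omega), harmonicSq_zmod_reflect hp (by omega)]
  ring

end ZMod

section Padic

variable {p : ℕ} [Fact p.Prime]

lemma PadicInt.isUnit_natCast_of_lt {j : ℕ} (h0 : 0 < j) (hj : j < p) : IsUnit (j : ℤ_[p]) := by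
  rw [PadicInt.isUnit_iff, PadicInt.norm_natCast_eq_one_iff]
  exact Nat.coprime_of_lt_prime h0.ne' hj Fact.out

lemma PadicInt.map_harmonicSq {K : Type*} [DivisionRing K] (f : ℤ_[p] →+* K) {t : ℕ}
    (ht : t < p) : f (harmonicSq ℤ_[p] t) = harmonicSq K t :=
  _root_.map_harmonicSq f fun j hj => by
    rw [mem_Icc] at hj; exact PadicInt.isUnit_natCast_of_lt (by omega) (by omega)

lemma PadicInt.map_binomHarmonicTerm {K : Type*} [DivisionRing K] (f : ℤ_[p] →+* K)
    {m n k : ℕ} (hmk : m + k < p) :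
    f (binomHarmonicTerm ℤ_[p] m n k) = binomHarmonicTerm K m n k := by
  simp only [binomHarmonicTerm, map_mul, map_pow, map_add, map_natCast,
    PadicInt.map_harmonicSq f (show k < p by omega), PadicInt.map_harmonicSq f (show k + m < p by omega)]

lemma PadicInt.norm_le_inv_of_toZMod_eq_zero {z : ℤ_[p]} (hz : PadicInt.toZMod z = 0) :
    ‖z‖ ≤ (p : ℝ)⁻¹ := by
  have hmem : z ∈ Ideal.span {(p : ℤ_[p]) ^ 1} := by
    rw [pow_one, ← PadicInt.maximalIdeal_eq_span_p, ← PadicInt.ker_toZMod]; exact hz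
  simpa using (PadicInt.norm_le_pow_iff_mem_span_pow z 1).mpr hmem

lemma norm_sum_range_sub_binomHarmonicTerm_le (hp : 3 < p) {m n : ℕ} (hmn : p - 1 = m * n) :
    ‖∑ k ∈ range (p - m), binomHarmonicTerm ℚ_[p] m n k‖ ≤ (p : ℝ)⁻¹ := by
  set z : ℤ_[p] := ∑ k ∈ range (p - m), binomHarmonicTerm ℤ_[p] m n k
  have hmap {K : Type} [DivisionRing K] (f : ℤ_[p] →+* K) :
      f z = ∑ k ∈ range (p - m), binomHarmonicTerm K m n k := by
    rw [map_sum]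
    exact sum_congr rfl fun k hk => PadicInt.map_binomHarmonicTerm f (by rw [mem_range] at hk; omega)
  rw [← hmap PadicInt.Coe.ringHom]
  exact PadicInt.norm_le_inv_of_toZMod_eq_zero ((hmap _).trans (sum_binomHarmonicTerm_zmod hp hmn))

lemma norm_harmonicSq_le_one {t : ℕ} (ht : t < p) : ‖harmonicSq ℚ_[p] t‖ ≤ 1 := by
  rw [← PadicInt.map_harmonicSq PadicInt.Coe.ringHom ht]
  exact PadicInt.norm_le_one _

lemma Padic.norm_le_inv_of_lt_one {x : ℚ_[p]} (hx : ‖x‖ < 1) : ‖x‖ ≤ (p : ℝ)⁻¹ := by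
  simpa using (Padic.norm_le_pow_iff_norm_lt_pow_add_one x (-1)).mpr (by simpa using hx)

lemma Padic.inv_le_norm_natCast {j : ℕ} (h0 : 0 < j) (hj : j < p ^ 2) :
    (p : ℝ)⁻¹ ≤ ‖(j : ℚ_[p])‖ := by
  have hndvd : ¬ ((p ^ 2 : ℕ) : ℤ) ∣ (j : ℤ) :=
    mod_cast Nat.not_dvd_of_pos_of_lt h0 hj
  have := (Padic.norm_int_le_pow_iff_dvd (p := p) j 2).not.mpr (by exact_mod_cast hndvd)
  rw [Padic.norm_le_pow_iff_norm_lt_pow_add_one, not_lt] at this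
  simpa using this

lemma norm_harmonicSq_le_sq {t : ℕ} (ht : t < p ^ 2) : ‖harmonicSq ℚ_[p] t‖ ≤ (p : ℝ) ^ 2 := by
  have hp : (0 : ℝ) < p := mod_cast (Fact.out : p.Prime).pos
  refine IsUltrametricDist.norm_sum_le_of_forall_le_of_nonneg (by positivity) fun j hj => ?_
  rw [mem_Icc] at hj
  have hj' := Padic.inv_le_norm_natCast (p := p) (by omega) (by omega : j < p ^ 2)
  rw [Ring.inverse_eq_inv, norm_inv, norm_pow]
  calc (‖(j : ℚ_[p])‖ ^ 2)⁻¹ ≤ ((p : ℝ)⁻¹ ^ 2)⁻¹ :=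
        inv_anti₀ (by positivity) (pow_le_pow_left₀ (by positivity) hj' 2)
    _ = (p : ℝ) ^ 2 := by rw [inv_pow, inv_inv]

lemma norm_choose_pow_mul_le {m n k : ℕ} (hn : 3 ≤ n) (hm : m < p) (hk : k < p)
    (hmk : p ≤ m + k) {x : ℚ_[p]} (hx : ‖x‖ ≤ (p : ℝ) ^ 2) :
    ‖((m + k).choose m : ℚ_[p]) ^ n * x‖ ≤ (p : ℝ)⁻¹ := by
  have hp : (0 : ℝ) < p := mod_cast (Fact.out : p.Prime).pos
  have hc : ‖((m + k).choose m : ℚ_[p])‖ ≤ (p : ℝ)⁻¹ :=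
    Padic.norm_le_inv_of_lt_one (Padic.norm_natCast_lt_one_iff.mpr
      ((Fact.out : p.Prime).dvd_choose_add hm hk hmk))
  have hc1 : ‖((m + k).choose m : ℚ_[p])‖ ≤ 1 := hc.trans (Nat.cast_inv_le_one p)
  rw [norm_mul, norm_pow]
  calc ‖((m + k).choose m : ℚ_[p])‖ ^ n * ‖x‖
      ≤ ‖((m + k).choose m : ℚ_[p])‖ ^ 3 * (p : ℝ) ^ 2 :=
        mul_le_mul (pow_le_pow_of_le_one (norm_nonneg _) hc1 hn) hx (norm_nonneg _)
          (by positivity)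
    _ ≤ (p : ℝ)⁻¹ ^ 3 * (p : ℝ) ^ 2 := by gcongr
    _ = (p : ℝ)⁻¹ := by field_simp

lemma norm_choose_pow_mul_harmonicSq_le_one {m n k t : ℕ} (hn : 3 ≤ n) (hm : m < p) (hk : k < p)
    (ht : t ≤ k + m) : ‖((m + k).choose m : ℚ_[p]) ^ n * harmonicSq ℚ_[p] t‖ ≤ 1 := by
  by_cases htp : t < p
  · rw [norm_mul, norm_pow]
    exact mul_le_one₀ (pow_le_one₀ (norm_nonneg _) (IsUltrametricDist.norm_natCast_le_one _ _))
      (norm_nonneg _) (norm_harmonicSq_le_one htp)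
  · have hp2 := (Fact.out : p.Prime).two_le
    exact (norm_choose_pow_mul_le hn hm hk (by omega) (norm_harmonicSq_le_sq (by nlinarith))).trans
      (Nat.cast_inv_le_one p)

lemma norm_binomHarmonicTerm_le {m n k : ℕ} (hn : 3 ≤ n) (hm : m < p) (hk : k < p)
    (hmk : p ≤ m + k) : ‖binomHarmonicTerm ℚ_[p] m n k‖ ≤ (p : ℝ)⁻¹ := by
  have hp2 := (Fact.out : p.Prime).two_le
  refine norm_choose_pow_mul_le hn hm hk hmk ((IsUltrametricDist.norm_add_le_max _ _).trans
    (max_le (norm_harmonicSq_le_sq ?_) (norm_harmonicSq_le_sq ?_))) <;> nlinarith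

lemma norm_sum_range_binomHarmonicTerm_le {m n : ℕ} (hn : 3 ≤ n) (hp : 3 < p)
    (hmn : p - 1 = m * n) : ‖∑ k ∈ range p, binomHarmonicTerm ℚ_[p] m n k‖ ≤ (p : ℝ)⁻¹ := by
  have hmp : m < p := by have := Nat.le_mul_of_pos_right m (by omega : 0 < n); omega
  rw [← sum_range_add_sum_Ico _ (Nat.sub_le p m)]
  refine (IsUltrametricDist.norm_add_le_max _ _).trans
    (max_le (norm_sum_range_sub_binomHarmonicTerm_le hp hmn) ?_)
  refine IsUltrametricDist.norm_sum_le_of_forall_le_of_nonneg (by positivity) fun k hk => ?_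
  rw [mem_Ico] at hk
  exact norm_binomHarmonicTerm_le hn hmp hk.2 (by omega)

end Padic

theorem harmonic_square_reciprocal_congruence_mod_p_general (n p m : ℕ) [Fact p.Prime]
    (hn : 3 ≤ n) (hp : 3 < p) (hm : p - 1 = m * n) :
    ‖((∑ k ∈ Finset.range p, (Nat.choose (m + k) m : ℚ) ^ n *
        ∑ j ∈ Finset.Icc 1 k, (1 : ℚ) / (j : ℚ) ^ 2 : ℚ) : ℚ_[p])‖ ≤ 1 ∧
    ‖((∑ k ∈ Finset.range p, (Nat.choose (m + k) m : ℚ) ^ n *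
        ∑ j ∈ Finset.Icc 1 (k + m), (1 : ℚ) / (j : ℚ) ^ 2 : ℚ) : ℚ_[p])‖ ≤ 1 ∧
    ‖((∑ k ∈ Finset.range p, (Nat.choose (m + k) m : ℚ) ^ n *
        ∑ j ∈ Finset.Icc 1 k, (1 : ℚ) / (j : ℚ) ^ 2 : ℚ) : ℚ_[p]) -
      (-((∑ k ∈ Finset.range p, (Nat.choose (m + k) m : ℚ) ^ n *
        ∑ j ∈ Finset.Icc 1 (k + m), (1 : ℚ) / (j : ℚ) ^ 2 : ℚ) : ℚ_[p]))‖ ≤ (p : ℝ) ^ (-1 : ℤ) := by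
  have hmp : m < p := by have := Nat.le_mul_of_pos_right m (by omega : 0 < n); omega
  have hS : ∀ s : ℕ → ℕ, ((∑ k ∈ range p, ((m + k).choose m : ℚ) ^ n *
      ∑ j ∈ Icc 1 (s k), (1 : ℚ) / (j : ℚ) ^ 2 : ℚ) : ℚ_[p]) =
      ∑ k ∈ range p, ((m + k).choose m : ℚ_[p]) ^ n * harmonicSq ℚ_[p] (s k) := fun s => by
    push_cast [harmonicSq_eq_sum_one_div]; rfl
  have hS1 := hS fun k => k
  have hS2 := hS (· + m)
  beta_reduce at hS1 hS2
  refine ⟨?_, ?_, ?_⟩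
  · rw [hS1]
    exact IsUltrametricDist.norm_sum_le_of_forall_le_of_nonneg zero_le_one fun k hk =>
      norm_choose_pow_mul_harmonicSq_le_one hn hmp (mem_range.mp hk) (by omega)
  · rw [hS2]
    exact IsUltrametricDist.norm_sum_le_of_forall_le_of_nonneg zero_le_one fun k hk =>
      norm_choose_pow_mul_harmonicSq_le_one hn hmp (mem_range.mp hk) le_rfl
  · rw [hS1, hS2, sub_neg_eq_add, ← sum_add_distrib, zpow_neg_one]
    simpa only [binomHarmonicTerm, mul_add] using norm_sum_range_binomHarmonicTerm_le hn hp hm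

/-- congruence modulo `p` for
`∑_{k=0}^{p-1} C(m+k,m)^n ∑_{j=1}^k 1/j² ≡ −∑_{k=0}^{p-1} C(m+k,m)^n ∑_{j=1}^{k+m} 1/j²`. -/
theorem harmonic_square_reciprocal_congruence_mod_p (n p m : ℕ) [Fact p.Prime]
    (hn : 3 ≤ n) (hp : 3 < p) (hpn : p ≡ 1 [MOD n]) (hm : p - 1 = m * n) :
    ‖((∑ k ∈ Finset.range p, (Nat.choose (m + k) m : ℚ) ^ n *
        ∑ j ∈ Finset.Icc 1 k, (1 : ℚ) / (j : ℚ) ^ 2 : ℚ) : ℚ_[p])‖ ≤ 1 ∧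
    ‖((∑ k ∈ Finset.range p, (Nat.choose (m + k) m : ℚ) ^ n *
        ∑ j ∈ Finset.Icc 1 (k + m), (1 : ℚ) / (j : ℚ) ^ 2 : ℚ) : ℚ_[p])‖ ≤ 1 ∧
    ‖((∑ k ∈ Finset.range p, (Nat.choose (m + k) m : ℚ) ^ n *
        ∑ j ∈ Finset.Icc 1 k, (1 : ℚ) / (j : ℚ) ^ 2 : ℚ) : ℚ_[p]) -
      (-((∑ k ∈ Finset.range p, (Nat.choose (m + k) m : ℚ) ^ n *
        ∑ j ∈ Finset.Icc 1 (k + m), (1 : ℚ) / (j : ℚ) ^ 2 : ℚ) : ℚ_[p]))‖ ≤ (p : ℝ) ^ (-1 : ℤ) :=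
  harmonic_square_reciprocal_congruence_mod_p_general n p m hn hp hm
end

section
/- Let n ≥ 3 be an integer and p > 3 a prime with p ≡ 1 (mod n), and set m = (p−1)/n. Then ∑_{k=0}^{p−1} C(m+k, m)^n · ∑_{j=1}^k 1/j² ≡ 0 (mod p), as a congruence of p-integral rationals. -/
/-!
Multiplying by `L² = ((p-1)!)²` turns the sum into an integer congruent mod `p` to
`L² ∑_{k<p} C(m+k,m)^n H(k)`, where `H(k) = ∑_{j=1}^k j⁻²` in `𝔽_p`. Since
`m! · C(m+k,m) = F(k) := (k+1)⋯(k+m)`, it suffices that `T = ∑_{x ∈ 𝔽_p} F(x)^n H(x)` vanishes.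
On `𝔽_p`, `H(x+1) = H(x) + (x+1)⁻²` holds cyclically and `H(-1-x) = -H(x)`; as `mn = p-1` is
even, `F(-1-x)^n = F(x-m)^n`. Substituting `x ↦ -1-x` and then shifting by `m` gives
`T = -T - ∑_{i=1}^m ∑_x F(x)^n (x+i)⁻²`. Each inner sum vanishes: as `n ≥ 3`, `(X+i)³ ∣ F^n`, so
`F^n (X+i)⁻²` agrees on `𝔽_p` with a polynomial of degree `p-3 < p-1`. Hence `2T = 0`.
-/

open Finset Polynomial
open scoped Nat

theorem ZMod.sum_univ_eq_sum_range {p : ℕ} [NeZero p] {M : Type*} [AddCommMonoid M]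
    (f : ZMod p → M) : ∑ x, f x = ∑ k ∈ range p, f k :=
  sum_nbij' ZMod.val Nat.cast (fun x _ ↦ mem_range.2 x.val_lt) (fun _ _ ↦ mem_univ _)
    (fun x _ ↦ ZMod.natCast_zmod_val x) (fun _ hk ↦ ZMod.val_cast_of_lt (mem_range.1 hk))
    (fun x _ ↦ by rw [ZMod.natCast_zmod_val])

theorem ZMod.apply_eq_apply_zero_of_add_one {p : ℕ} [NeZero p] {M : Type*} {f : ZMod p → M}
    (h : ∀ x, f (x + 1) = f x) (x : ZMod p) : f x = f 0 := by
  rw [← ZMod.natCast_zmod_val x]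
  induction x.val with
  | zero => rw [Nat.cast_zero]
  | succ k ih => rw [Nat.cast_succ, h, ih]

theorem Polynomial.sum_eval_eq_zero {K : Type*} [Field K] [Fintype K] {P : K[X]}
    (hP : P.natDegree < Fintype.card K - 1) : ∑ x, P.eval x = 0 := by
  simp_rw [eval_eq_sum_range, Finset.sum_comm (s := univ), ← mul_sum]
  exact sum_eq_zero fun i hi ↦ by
    rw [FiniteField.sum_pow_lt_card_sub_one K i
      (lt_of_le_of_lt (Nat.lt_succ_iff.1 (mem_range.1 hi)) hP), mul_zero]

theorem FiniteField.sum_eval_mul_inv_pow_eq_zero {K : Type*} [Field K] [Fintype K] {P : K[X]}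
    {c : K} {r : ℕ} (hr : r ≠ 0) (hdvd : (X + C c) ^ (r + 1) ∣ P)
    (hdeg : P.natDegree ≤ Fintype.card K - 1) :
    ∑ x, P.eval x * ((x + c) ^ r)⁻¹ = 0 := by
  obtain ⟨S, rfl⟩ := hdvd
  rcases eq_or_ne S 0 with rfl | hS
  · simp
  have hX : X + C c ≠ 0 := X_add_C_ne_zero c
  have hdegS : S.natDegree + (r + 1) ≤ Fintype.card K - 1 := by
    rwa [natDegree_mul (pow_ne_zero _ hX) hS, natDegree_pow, natDegree_X_add_C, mul_one,
      add_comm] at hdeg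
  -- `0⁻¹ = 0` makes this hold also at the pole `x = -c`
  have hterm : ∀ x : K, (x + c) ^ (r + 1) * ((x + c) ^ r)⁻¹ = x + c := fun x ↦ by
    rcases eq_or_ne (x + c) 0 with h | h
    · simp [h]
    · rw [pow_succ', mul_assoc, mul_inv_cancel₀ (pow_ne_zero _ h), mul_one]
  calc ∑ x, ((X + C c) ^ (r + 1) * S).eval x * ((x + c) ^ r)⁻¹
      = ∑ x, ((X + C c) * S).eval x := sum_congr rfl fun x _ ↦ by
        simp only [eval_mul, eval_pow, eval_add, eval_X, eval_C]
        rw [mul_right_comm, hterm]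
    _ = 0 := sum_eval_eq_zero <| by
        have := natDegree_mul_le (p := X + C c) (q := S)
        rw [natDegree_X_add_C] at this
        omega

theorem ascPochhammer_eval_neg {R : Type*} [CommRing R] (m : ℕ) (x : R) :
    (ascPochhammer R m).eval (-x) = (-1) ^ m * (ascPochhammer R m).eval (x - m + 1) := by
  rw [ascPochhammer_eval_neg_eq_descPochhammer, descPochhammer_eval_eq_ascPochhammer]

theorem factorial_mul_choose_eq_ascPochhammer_eval {R : Type*} [CommSemiring R] (m k : ℕ) :
    (m ! : R) * ((m + k).choose m : ℕ) = (ascPochhammer R m).eval ((k : R) + 1) := by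
  rw [← Nat.cast_mul, ← Nat.cast_add_one, ← ascPochhammer_eval_cast,
    ascPochhammer_nat_eq_ascFactorial, Nat.ascFactorial_eq_factorial_mul_choose, add_comm m]

/-- The generalized harmonic number `H_k^{(r)}` reduced mod `p`, with `x` read as `k = x.val < p`. -/
noncomputable def harmonicZMod {p : ℕ} (r : ℕ) (x : ZMod p) : ZMod p :=
  ∑ j ∈ Icc 1 x.val, ((j : ZMod p) ^ r)⁻¹

section harmonicZMod

variable {p : ℕ} [Fact p.Prime] {r : ℕ}

theorem harmonicZMod_natCast {k : ℕ} (hk : k < p) :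
    harmonicZMod r (k : ZMod p) = ∑ j ∈ Icc 1 k, ((j : ZMod p) ^ r)⁻¹ := by
  rw [harmonicZMod, ZMod.val_cast_of_lt hk]

@[simp]
theorem harmonicZMod_zero : harmonicZMod r (0 : ZMod p) = 0 := by
  simp [harmonicZMod]

theorem harmonicZMod_neg_one (hr : r ≠ 0) (hrp : r < p - 1) :
    harmonicZMod r (-1 : ZMod p) = 0 := by
  have hp := (Fact.out : p.Prime).pos
  have hval : (-1 : ZMod p).val = p - 1 := by
    rw [ZMod.val_neg_of_ne_zero, ZMod.val_one_eq_one_mod, Nat.mod_eq_of_lt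
      (Fact.out : p.Prime).one_lt]
  have hsum : ∑ x : ZMod p, (x ^ r)⁻¹ = 0 := by
    rw [← Equiv.sum_comp (Equiv.inv (ZMod p)) fun x ↦ (x ^ r)⁻¹]
    simpa [inv_pow] using FiniteField.sum_pow_lt_card_sub_one (ZMod p) r
      (by rwa [ZMod.card])
  rw [harmonicZMod, hval, ← hsum, ZMod.sum_univ_eq_sum_range,
    Nat.range_eq_Icc_zero_sub_one _ hp.ne', ← insert_Icc_add_one_left_eq_Icc (Nat.zero_le _),
    sum_insert (by simp)]
  simp [hr]

theorem harmonicZMod_add_one (hr : r ≠ 0) (hrp : r < p - 1) (x : ZMod p) :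
    harmonicZMod r (x + 1) = harmonicZMod r x + ((x + 1) ^ r)⁻¹ := by
  by_cases hx : x = -1
  · simp [hx, harmonicZMod_neg_one hr hrp, hr]
  have hval : (x + 1).val = x.val + 1 := by
    have : Fact (1 < p) := ⟨(Fact.out : p.Prime).one_lt⟩
    rw [ZMod.val_add, ZMod.val_one, Nat.mod_eq_of_lt]
    refine lt_of_le_of_ne x.val_lt fun h ↦ hx (eq_neg_of_add_eq_zero_left ?_)
    rw [← ZMod.natCast_zmod_val x, ← Nat.cast_add_one, h, ZMod.natCast_self]
  rw [harmonicZMod, hval, sum_Icc_succ_top (Nat.le_add_left 1 _), ← harmonicZMod, Nat.cast_succ,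
    ZMod.natCast_zmod_val]

theorem harmonicZMod_add_natCast (hr : r ≠ 0) (hrp : r < p - 1) (x : ZMod p) (a : ℕ) :
    harmonicZMod r (x + (a : ZMod p)) =
      harmonicZMod r x + ∑ i ∈ Icc 1 a, ((x + (i : ZMod p)) ^ r)⁻¹ := by
  induction a with
  | zero => simp
  | succ a ih =>
    rw [Nat.cast_succ, ← add_assoc, harmonicZMod_add_one hr hrp, ih,
      sum_Icc_succ_top (Nat.le_add_left 1 a), Nat.cast_succ, add_assoc, add_assoc]

theorem harmonicZMod_neg_one_sub (heven : Even r) (hr : r ≠ 0) (hrp : r < p - 1) (x : ZMod p) :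
    harmonicZMod r (-1 - x) = -harmonicZMod r x := by
  rw [eq_neg_iff_add_eq_zero]
  have hshift : ∀ y : ZMod p, harmonicZMod r (-1 - (y + 1)) + harmonicZMod r (y + 1) =
      harmonicZMod r (-1 - y) + harmonicZMod r y := fun y ↦ by
    have h := harmonicZMod_add_one hr hrp (-1 - (y + 1))
    rw [show -1 - (y + 1) + 1 = -(y + 1) by ring, heven.neg_pow] at h
    rw [harmonicZMod_add_one hr hrp, show -1 - y = -(y + 1) by ring, h]
    ring
  rw [ZMod.apply_eq_apply_zero_of_add_one
    (f := fun y ↦ harmonicZMod r (-1 - y) + harmonicZMod r y) hshift x]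
  simp [harmonicZMod_neg_one hr hrp]

end harmonicZMod

section vanishing

variable {p : ℕ} [Fact p.Prime]

theorem sum_ascPochhammer_pow_mul_harmonicZMod_eq_zero {m n r : ℕ} (heven : Even r) (hr : r ≠ 0)
    (hrp : r < p - 1) (hrn : r < n) (hmn : m * n = p - 1) :
    ∑ x : ZMod p, (ascPochhammer (ZMod p) m).eval (x + 1) ^ n * harmonicZMod r x = 0 := by
  set F : ZMod p → ZMod p := fun x ↦ (ascPochhammer (ZMod p) m).eval (x + 1) ^ n with hF
  have hp2 : p ≠ 2 := by
    obtain ⟨k, rfl⟩ := heven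
    omega
  have hsymm : ∀ x, F (-1 - x) = F (x - m) := fun x ↦ by
    simp only [hF]
    rw [show -1 - x + 1 = -x by ring, ascPochhammer_eval_neg, mul_pow, ← pow_mul, hmn,
      ((Fact.out : p.Prime).even_sub_one hp2).neg_one_pow, one_mul]
  have hvanish : ∀ i ∈ Icc 1 m, ∑ x, F x * ((x + i) ^ r)⁻¹ = 0 := fun i hi ↦ by
    obtain ⟨hi1, him⟩ := mem_Icc.1 hi
    have hroot : X + C (i : ZMod p) ∣ (ascPochhammer (ZMod p) m).comp (X + C 1) := by
      rw [← sub_neg_eq_add, ← C_neg, dvd_iff_isRoot, IsRoot, eval_comp, eval_add, eval_X, eval_C,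
        show -(i : ZMod p) + 1 = -((i - 1 : ℕ) : ZMod p) by rw [Nat.cast_sub hi1]; ring]
      exact ascPochhammer_eval_neg_coe_nat_of_lt (by omega)
    have := FiniteField.sum_eval_mul_inv_pow_eq_zero (c := (i : ZMod p)) hr
      ((pow_dvd_pow _ hrn).trans (pow_dvd_pow_of_dvd hroot n)) (by
        rw [ZMod.card, natDegree_pow, natDegree_comp, ascPochhammer_natDegree, natDegree_X_add_C,
          mul_one, mul_comm, hmn])
    simpa [eval_comp] using this
  have hT : ∑ x, F x * harmonicZMod r x = -∑ x, F x * harmonicZMod r x := by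
    calc ∑ x, F x * harmonicZMod r x
        = ∑ x, F (-1 - x) * harmonicZMod r (-1 - x) :=
          Fintype.sum_equiv (Equiv.subLeft (-1)) _ _ fun x ↦ by
            rw [Equiv.subLeft_apply, sub_sub_cancel]
      _ = -∑ x, F (x - m) * harmonicZMod r x := by
          simp only [hsymm, harmonicZMod_neg_one_sub heven hr hrp, mul_neg, sum_neg_distrib]
      _ = -∑ x, F x * harmonicZMod r (x + (m : ZMod p)) := by
          rw [Fintype.sum_equiv (Equiv.subRight (m : ZMod p)) _
            (fun x ↦ F x * harmonicZMod r (x + (m : ZMod p))) fun x ↦ by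
              rw [Equiv.subRight_apply, sub_add_cancel]]
      _ = -(∑ x, F x * harmonicZMod r x +
            ∑ i ∈ Icc 1 m, ∑ x, F x * ((x + (i : ZMod p)) ^ r)⁻¹) := by
          simp only [harmonicZMod_add_natCast hr hrp, mul_add, mul_sum, sum_add_distrib]
          rw [sum_comm (s := univ)]
      _ = -∑ x, F x * harmonicZMod r x := by rw [sum_eq_zero hvanish, add_zero]
  exact (Ring.eq_self_iff_eq_zero_of_char_ne_two (by rwa [ZMod.ringChar_zmod_n])).1 hT.symm

theorem sum_choose_pow_mul_harmonicZMod_eq_zero {m n r : ℕ} (heven : Even r) (hr : r ≠ 0)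
    (hrp : r < p - 1) (hrn : r < n) (hmn : m * n = p - 1) :
    ∑ k ∈ range p, ((m + k).choose m : ZMod p) ^ n * harmonicZMod r (k : ZMod p) = 0 := by
  have hm : m < p := by
    have := Nat.le_mul_of_pos_right m (show 0 < n by omega)
    omega
  have hfac : (m ! : ZMod p) ^ n ≠ 0 := pow_ne_zero _ <| by
    rw [Ne, ZMod.natCast_eq_zero_iff, (Fact.out : p.Prime).dvd_factorial]
    omega
  refine (mul_eq_zero.1 ?_).resolve_left hfac
  rw [mul_sum, ← sum_ascPochhammer_pow_mul_harmonicZMod_eq_zero heven hr hrp hrn hmn,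
    ZMod.sum_univ_eq_sum_range]
  refine sum_congr rfl fun k _ ↦ ?_
  rw [← mul_assoc, ← mul_pow, factorial_mul_choose_eq_ascPochhammer_eval]

end vanishing

theorem sum_Icc_natCast_factorial_div_sq {K : Type*} [Field K] {N k : ℕ} (hk : k ≤ N)
    (hne : ∀ j ∈ Icc 1 k, (j : K) ≠ 0) :
    ∑ j ∈ Icc 1 k, ((N ! / j : ℕ) : K) ^ 2 = (N ! : K) ^ 2 * ∑ j ∈ Icc 1 k, ((j : K) ^ 2)⁻¹ := by
  rw [mul_sum]
  refine sum_congr rfl fun j hj ↦ ?_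
  obtain ⟨hj1, hjk⟩ := mem_Icc.1 hj
  rw [Nat.cast_div (Nat.dvd_factorial hj1 (hjk.trans hk)) (hne j hj), div_pow, div_eq_mul_inv]

theorem sum_choose_pow_mul_sum_one_div_sq_mul_factorial_sq (p m n : ℕ) :
    (∑ k ∈ range p, ((m + k).choose m : ℚ) ^ n * ∑ j ∈ Icc 1 k, (1 : ℚ) / (j : ℚ) ^ 2) *
        ((p - 1)! ^ 2 : ℕ) =
      ((∑ k ∈ range p, (m + k).choose m ^ n * ∑ j ∈ Icc 1 k, ((p - 1)! / j) ^ 2 : ℕ) : ℚ) := by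
  push_cast
  rw [sum_mul]
  refine sum_congr rfl fun k hk ↦ ?_
  rw [sum_Icc_natCast_factorial_div_sq (Nat.le_sub_one_of_lt (mem_range.1 hk)) fun j hj ↦
    Nat.cast_ne_zero.2 (by have := (mem_Icc.1 hj).1; omega)]
  simp only [one_div]
  ring

theorem prime_dvd_sum_choose_pow_mul_sum_factorial_div_sq {p m n : ℕ} [Fact p.Prime]
    (hn : 3 ≤ n) (hp : 3 < p) (hmn : m * n = p - 1) :
    p ∣ ∑ k ∈ range p, (m + k).choose m ^ n * ∑ j ∈ Icc 1 k, ((p - 1)! / j) ^ 2 := by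
  rw [← ZMod.natCast_eq_zero_iff]
  calc _ = ((p - 1)! : ZMod p) ^ 2 *
        ∑ k ∈ range p, ((m + k).choose m : ZMod p) ^ n * harmonicZMod 2 (k : ZMod p) := by
        push_cast
        rw [mul_sum]
        refine sum_congr rfl fun k hk ↦ ?_
        have hk := mem_range.1 hk
        rw [sum_Icc_natCast_factorial_div_sq (Nat.le_sub_one_of_lt hk) fun j hj ↦ ?_,
          harmonicZMod_natCast hk]
        · ring
        · obtain ⟨hj1, hjk⟩ := mem_Icc.1 hj
          rw [Ne, ZMod.natCast_eq_zero_iff]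
          exact Nat.not_dvd_of_pos_of_lt hj1 (by omega)
    _ = 0 := by
        rw [sum_choose_pow_mul_harmonicZMod_eq_zero even_two two_ne_zero (by omega) (by omega)
          hmn, mul_zero]

theorem Padic.norm_le_inv_of_mul_natCast_eq {p : ℕ} [Fact p.Prime] {q : ℚ} {d N : ℕ}
    (hd : ¬p ∣ d) (hN : p ∣ N) (h : q * d = N) : ‖(q : ℚ_[p])‖ ≤ (p : ℝ) ^ (-1 : ℤ) := by
  have hd1 : ‖(d : ℚ_[p])‖ = 1 :=
    Padic.norm_natCast_eq_one_iff.2 ((Nat.Prime.coprime_iff_not_dvd Fact.out).2 hd)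
  rw [Padic.norm_le_pow_iff_norm_lt_pow_add_one, neg_add_cancel, zpow_zero]
  calc ‖(q : ℚ_[p])‖ = ‖(q : ℚ_[p]) * d‖ := by rw [norm_mul, hd1, mul_one]
    _ = ‖(N : ℚ_[p])‖ := by exact_mod_cast congrArg (fun t : ℚ ↦ ‖(t : ℚ_[p])‖) h
    _ < 1 := Padic.norm_natCast_lt_one_iff.2 hN

theorem harmonic_square_reciprocal_vanishes_mod_p_general (n p m : ℕ) [Fact p.Prime]
    (hn : 3 ≤ n) (hp : 3 < p) (hm : p - 1 = m * n) :
    ‖((∑ k ∈ Finset.range p, (Nat.choose (m + k) m : ℚ) ^ n *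
        ∑ j ∈ Finset.Icc 1 k, (1 : ℚ) / (j : ℚ) ^ 2 : ℚ) : ℚ_[p])‖ ≤ (p : ℝ) ^ (-1 : ℤ) := by
  refine Padic.norm_le_inv_of_mul_natCast_eq ?_
    (prime_dvd_sum_choose_pow_mul_sum_factorial_div_sq hn hp hm.symm)
    (sum_choose_pow_mul_sum_one_div_sq_mul_factorial_sq p m n)
  intro h
  have := (Fact.out : p.Prime).dvd_of_dvd_pow h
  rw [(Fact.out : p.Prime).dvd_factorial] at this
  omega

/-- `∑_{k=0}^{p-1} C(m+k,m)^n ∑_{j=1}^k 1/j² ≡ 0 (mod p)`,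
i.e. the `p`-adic valuation of the sum is positive. -/
theorem harmonic_square_reciprocal_vanishes_mod_p (n p m : ℕ) [Fact p.Prime]
    (hn : 3 ≤ n) (hp : 3 < p) (hpn : p ≡ 1 [MOD n]) (hm : p - 1 = m * n) :
    ‖((∑ k ∈ Finset.range p, (Nat.choose (m + k) m : ℚ) ^ n *
        ∑ j ∈ Finset.Icc 1 k, (1 : ℚ) / (j : ℚ) ^ 2 : ℚ) : ℚ_[p])‖ ≤ (p : ℝ) ^ (-1 : ℤ) :=
  harmonic_square_reciprocal_vanishes_mod_p_general n p m hn hp hm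
end

section
/- For nonnegative integers m₁, …, m_n and parameters b₁, …, b_n such that no b_i is a nonpositive integer exceeding −m_i in absolute value, the Karlsson–Minton identity holds: ∑_{k=0}^{m₁+⋯+m_n} ((−(m₁+⋯+m_n))_k / k!) · ∏_{i=1}^n (b_i+m_i)_k/(b_i)_k = (−1)^{m₁+⋯+m_n} · (m₁+⋯+m_n)! / ∏_{i=1}^n (b_i)_{m_i}. -/
/-- The rising factorial `(x)_k = x(x+1)⋯(x+k−1)`, with `(x)_0 = 1`. -/
def risingFactorial {K : Type*} [Field K] (x : K) (k : ℕ) : K :=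
  ∏ j ∈ Finset.range k, (x + (j : K))

open Polynomial fwdDiff Finset in
/-- Iterated forward difference of a polynomial of degree at most `M`, taken `M` times,
is the constant `M! * (coeff M)`. -/
lemma fwdDiff_iter_eval {K : Type*} [Field K] :
    ∀ (M : ℕ) (P : K[X]), P.natDegree ≤ M →
      (fwdDiff (1:K))^[M] (fun x => P.eval x) = fun _ => (M.factorial : K) * P.coeff M := by
  intro M
  induction M with
  | zero =>
    intro P hP
    rw [Polynomial.eq_C_of_natDegree_le_zero hP]
    simp
  | succ M IH =>
    intro P hP
    set Q : K[X] := P.comp (X + C 1) - P with hQ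
    have hQcoeff : ∀ j, Q.coeff j = (Polynomial.hasseDeriv j P).eval 1 - P.coeff j := by
      intro j
      rw [hQ, Polynomial.coeff_sub, ← Polynomial.taylor_apply, Polynomial.taylor_coeff]
    have hQtop : ∀ j, M < j → Q.coeff j = 0 := by
      intro j hj
      have hd : (Polynomial.hasseDeriv j P).natDegree < 1 := by
        have := Polynomial.natDegree_hasseDeriv_le P j
        omega
      rw [hQcoeff j, Polynomial.eval_eq_sum_range' hd]
      simp [Polynomial.hasseDeriv_coeff]
    have hQdeg : Q.natDegree ≤ M := Polynomial.natDegree_le_iff_coeff_eq_zero.2 hQtop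
    have hQM : Q.coeff M = (M + 1 : K) * P.coeff (M + 1) := by
      have hd : (Polynomial.hasseDeriv M P).natDegree < 2 := by
        have := Polynomial.natDegree_hasseDeriv_le P M
        omega
      rw [hQcoeff M, Polynomial.eval_eq_sum_range' hd]
      rw [Finset.sum_range_succ, Finset.sum_range_one]
      simp [Polynomial.hasseDeriv_coeff, Nat.choose_succ_self_right, add_comm 1 M]
    have hstep : fwdDiff (1:K) (fun x => P.eval x) = fun x => Q.eval x := by
      funext x
      simp [fwdDiff, hQ, Polynomial.eval_comp]
    rw [Function.iterate_succ_apply, hstep, IH Q hQdeg, hQM]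
    funext x
    rw [Nat.factorial_succ]
    push_cast
    ring

lemma risingFactorial_add {K : Type*} [Field K] (x : K) (k m : ℕ) :
    risingFactorial x (k + m) = risingFactorial x k * risingFactorial (x + k) m := by
  rw [risingFactorial, risingFactorial, risingFactorial, Finset.prod_range_add]
  congr 1
  refine Finset.prod_congr rfl fun j _ => ?_
  push_cast
  ring

lemma risingFactorial_neg_nat {K : Type*} [Field K] [CharZero K] (M : ℕ) :
    ∀ k ≤ M, risingFactorial (-(M:K)) k = (-1)^k * (Nat.descFactorial M k : K) := by
  intro k
  induction k with
  | zero => intro _; simp [risingFactorial]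
  | succ k IH =>
    intro hk
    rw [risingFactorial, Finset.prod_range_succ, ← risingFactorial,
      IH (by omega), Nat.descFactorial_succ]
    have h1 : ((M - k : ℕ) : K) = (M : K) - (k : K) := by
      have hkM : (k : ℕ) ≤ M := by omega
      push_cast [hkM]
      ring
    push_cast [h1]
    ring

/-- the Karlsson–Minton identity over a field of characteristic zero,
with the hypothesis that all denominators are nonzero. -/
theorem karlsson_minton {K : Type*} [Field K] [CharZero K] (n : ℕ)
    (m : Fin n → ℕ) (b : Fin n → K)
    (hb : ∀ i, ∀ j < ∑ i, m i, b i + (j : K) ≠ 0) :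
    ∑ k ∈ Finset.range ((∑ i, m i) + 1),
        risingFactorial (-((∑ i, m i : ℕ) : K)) k / (Nat.factorial k : K) *
          ∏ i, risingFactorial (b i + (m i : K)) k / risingFactorial (b i) k
      = (-1) ^ (∑ i, m i) * (Nat.factorial (∑ i, m i) : K) /
          ∏ i, risingFactorial (b i) (m i) := by
  classical
  set M := ∑ i, m i with hM
  have hrf : ∀ (i : Fin n) (k : ℕ), k ≤ M → risingFactorial (b i) k ≠ 0 := by
    intro i k hk
    refine Finset.prod_ne_zero_iff.2 fun j hj => ?_
    exact hb i j (lt_of_lt_of_le (Finset.mem_range.1 hj) hk)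
  have hmle : ∀ i, m i ≤ M := fun i =>
    Finset.single_le_sum (f := m) (fun _ _ => Nat.zero_le _) (Finset.mem_univ i)
  set P : Polynomial K :=
    ∏ i, ∏ j ∈ Finset.range (m i), (Polynomial.X + Polynomial.C (b i + j)) with hP
  have hPeval : ∀ x : K, P.eval x = ∏ i, risingFactorial (b i + x) (m i) := by
    intro x
    rw [hP]
    simp only [Polynomial.eval_prod, Polynomial.eval_add, Polynomial.eval_X, Polynomial.eval_C]
    refine Finset.prod_congr rfl fun i _ => ?_
    rw [risingFactorial]
    refine Finset.prod_congr rfl fun j _ => ?_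
    ring
  have hPmonic : P.Monic :=
    Polynomial.monic_prod_of_monic _ _ fun i _ =>
      Polynomial.monic_prod_of_monic _ _ fun j _ => Polynomial.monic_X_add_C _
  have hPdeg : P.natDegree = M := by
    rw [hP, Polynomial.natDegree_prod_of_monic _ _
      (fun i _ => Polynomial.monic_prod_of_monic _ _ fun j _ => Polynomial.monic_X_add_C _)]
    refine Finset.sum_congr rfl fun i _ => ?_
    rw [Polynomial.natDegree_prod_of_monic _ _ (fun j _ => Polynomial.monic_X_add_C _)]
    simp only [Polynomial.natDegree_X_add_C, Finset.sum_const, smul_eq_mul, mul_one,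
      Finset.card_range]
  have hcoeffM : P.coeff M = 1 := by
    rw [← hPdeg]; exact hPmonic.coeff_natDegree
  have key := fwdDiff_iter_eval M P hPdeg.le
  have h1 := fwdDiff_iter_eq_sum_shift (1:K) (fun x => P.eval x) M (0:K)
  rw [key, hcoeffM, mul_one] at h1
  have hsum : ∑ k ∈ Finset.range (M+1), (-1:K)^k * (Nat.choose M k : K) * P.eval (k:K)
      = (-1)^M * (M.factorial : K) := by
    have h1' : (M.factorial : K) = ∑ k ∈ Finset.range (M+1),
        ((-1:ℤ)^(M-k) * (M.choose k : ℤ)) • Polynomial.eval ((0:K) + k • (1:K)) P := h1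
    rw [h1', Finset.mul_sum]
    refine Finset.sum_congr rfl fun k hk => ?_
    have hkM : k ≤ M := by
      have := Finset.mem_range.1 hk; omega
    have h2 : (-1:K)^(M-k) * (-1:K)^(M-k) = 1 := by
      rw [← pow_add]
      exact Even.neg_one_pow ⟨M - k, rfl⟩
    have hMsplit : (-1:K)^M = (-1:K)^(M-k) * (-1:K)^k := by
      rw [← pow_add]
      congr 1
      omega
    have h3 : (0:K) + (k : ℕ) • (1:K) = (k:K) := by simp
    rw [zsmul_eq_mul, h3]
    push_cast
    have h4 : (-1:K)^(M-k) * (-1:K)^M = (-1:K)^k := by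
      rw [hMsplit, ← mul_assoc, h2, one_mul]
    rw [← h4]
    ring
  have hterm : ∀ k ∈ Finset.range (M+1),
      risingFactorial (-(M:K)) k / (Nat.factorial k : K) *
          ∏ i, risingFactorial (b i + (m i : K)) k / risingFactorial (b i) k
        = (-1:K)^k * (Nat.choose M k : K) * P.eval (k:K) /
            ∏ i, risingFactorial (b i) (m i) := by
    intro k hk
    have hkM : k ≤ M := by
      have := Finset.mem_range.1 hk; omega
    have hbin : risingFactorial (-(M:K)) k / (Nat.factorial k : K)
        = (-1:K)^k * (Nat.choose M k : K) := by
      rw [risingFactorial_neg_nat M k hkM, Nat.descFactorial_eq_factorial_mul_choose]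
      push_cast
      have hf : (Nat.factorial k : K) ≠ 0 := by exact_mod_cast Nat.factorial_ne_zero k
      field_simp
    have hratio : ∀ i : Fin n,
        risingFactorial (b i + (m i : K)) k / risingFactorial (b i) k
          = risingFactorial (b i + (k : K)) (m i) / risingFactorial (b i) (m i) := by
      intro i
      rw [div_eq_div_iff (hrf i k hkM) (hrf i (m i) (hmle i))]
      have A := risingFactorial_add (b i) (m i) k
      have B := risingFactorial_add (b i) k (m i)
      have hcomm : risingFactorial (b i) (m i + k) = risingFactorial (b i) (k + m i) := by
        rw [Nat.add_comm]
      linear_combination hcomm - A + B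
    rw [hbin, Finset.prod_congr rfl (fun i _ => hratio i), Finset.prod_div_distrib,
      ← hPeval (k:K)]
    rw [mul_div_assoc]
  rw [Finset.sum_congr rfl hterm, ← Finset.sum_div, hsum]
end

section
/- For an odd prime p, the p-adic Gamma function satisfies Γ_p′(0)² = Γ_p″(0), i.e., the second derivative of log_p Γ_p at 0 vanishes. -/
/-- `Γ_p(n) = (−1)^n ∏_{1 ≤ k < n, p ∤ k} k` on the natural numbers. -/
def gammaPNat (p n : ℕ) : ℤ :=
  (-1) ^ n * ∏ k ∈ (Finset.Ico 1 n).filter (fun k => ¬ p ∣ k), (k : ℤ)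

/-!
For naturals `a, c`, going from `Γ_p(pa)` to `Γ_p(pa + p)` multiplies by `(-1)^p` times the
`p - 1` integers `pa + 1, …, pa + p - 1`; modulo `p(a + c + 1)` these are the negatives of the
block `pc + 1, …, pc + p - 1` in reverse order, and `(-1)^(p-1) = 1` for odd `p`. Induction
on `a` gives `Γ_p(pa) Γ_p(pc) ≡ Γ_p(p(a + c)) mod p(a + c)`. By continuity and density of `ℕ²`
in `ℤ_p²` the inequality `|Γ_p(pa) Γ_p(pc) - Γ_p(p(a + c))| ≤ |p(a + c)|` then holds for all
`a, c ∈ ℤ_p`, and `c = -a` gives `Γ_p(x) Γ_p(-x) = 1` on `pℤ_p`. Differentiating this identity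
twice at `0` gives `2 (Γ_p(0) Γ_p″(0) - Γ_p′(0)²) = 0`.
-/

open Finset Filter Topology

theorem ZMod.prod_block_reflect {p N a c : ℕ} (hp : Odd p) (hN : p * (a + c + 1) = N) :
    ∏ i ∈ range (p - 1), ((p * c + 1 + i : ℕ) : ZMod N) =
      ∏ i ∈ range (p - 1), ((p * a + 1 + i : ℕ) : ZMod N) := by
  have hneg : ∀ i ∈ range (p - 1),
      ((p * c + 1 + i : ℕ) : ZMod N) = -((p * a + 1 + (p - 1 - 1 - i) : ℕ) : ZMod N) := by
    intro i hi
    rw [mem_range] at hi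
    refine eq_neg_of_add_eq_zero_left ?_
    rw [← Nat.cast_add, ← ZMod.natCast_self N, ← hN]
    congr 1
    rw [mul_add, mul_add, mul_one]
    omega
  rw [prod_congr rfl hneg, prod_neg, card_range, (Nat.Odd.sub_odd hp odd_one).neg_one_pow,
    one_mul, prod_range_reflect (fun i => ((p * a + 1 + i : ℕ) : ZMod N))]

namespace gammaPNat

variable {p : ℕ}

@[simp]
theorem zero : gammaPNat p 0 = 1 := by
  simp [gammaPNat]

theorem succ (n : ℕ) :
    gammaPNat p (n + 1) = -(if p ∣ n then 1 else (n : ℤ)) * gammaPNat p n := by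
  rcases Nat.eq_zero_or_pos n with rfl | hn
  · simp [gammaPNat]
  · simp only [gammaPNat, prod_filter, prod_Ico_succ_top hn, pow_succ]
    split_ifs <;> ring

theorem add_one_add {m j : ℕ} (hm : p ∣ m) (hj : j < p) :
    gammaPNat p (m + 1 + j) =
      (-1) ^ (j + 1) * (∏ i ∈ range j, ((m + 1 + i : ℕ) : ℤ)) * gammaPNat p m := by
  induction j with
  | zero => simp [succ, hm]
  | succ j ih =>
    have hndvd : ¬ p ∣ m + 1 + j := fun h =>
      Nat.not_dvd_of_pos_of_lt j.succ_pos hj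
        ((Nat.dvd_add_right hm).mp (by rwa [add_assoc, add_comm 1] at h))
    rw [← add_assoc, succ, if_neg hndvd, ih (by omega), prod_range_succ]
    ring

theorem add_of_dvd {m : ℕ} (hp : 0 < p) (hm : p ∣ m) :
    gammaPNat p (m + p) =
      (-1) ^ p * (∏ i ∈ range (p - 1), ((m + 1 + i : ℕ) : ℤ)) * gammaPNat p m := by
  obtain ⟨q, rfl⟩ := Nat.exists_eq_add_one_of_ne_zero hp.ne'
  rw [Nat.add_sub_cancel, show m + (q + 1) = m + 1 + q by omega]
  exact add_one_add hm q.lt_add_one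

theorem cast_mul_eq_zmod (hp : Odd p) {N a c : ℕ} (hN : p * (a + c) = N) :
    ((gammaPNat p (p * a) * gammaPNat p (p * c) : ℤ) : ZMod N) = gammaPNat p N := by
  induction a generalizing c with
  | zero => simp [← hN]
  | succ a ih =>
    rw [← ih (c := c + 1) (by rw [← hN]; ring), mul_add_one, mul_add_one,
      add_of_dvd hp.pos (dvd_mul_right p a), add_of_dvd hp.pos (dvd_mul_right p c)]
    simp only [Int.cast_mul, Int.cast_pow, Int.cast_neg, Int.cast_one, Int.cast_prod,
      Int.cast_natCast]
    rw [ZMod.prod_block_reflect hp (a := a) (c := c) (by rw [← hN]; ring)]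
    ring

theorem dvd_mul_sub (hp : Odd p) (a c : ℕ) :
    ((p * (a + c) : ℕ) : ℤ) ∣
      gammaPNat p (p * a) * gammaPNat p (p * c) - gammaPNat p (p * (a + c)) := by
  rw [← ZMod.intCast_zmod_eq_zero_iff_dvd, Int.cast_sub, cast_mul_eq_zmod hp rfl, sub_self]

end gammaPNat

section Reflection

variable {𝕜 : Type*} [NontriviallyNormedField 𝕜] {f f' f'' : 𝕜 → 𝕜}

theorem hasDerivAt_comp_neg {c x : 𝕜} (hf : HasDerivAt f c (-x)) :
    HasDerivAt (fun y => f (-y)) (-c) x := by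
  simpa [Function.comp_def] using hf.comp x (hasDerivAt_neg x)

theorem hasDerivAt_mul_comp_neg {x : 𝕜} (hx : HasDerivAt f (f' x) x)
    (hnx : HasDerivAt f (f' (-x)) (-x)) :
    HasDerivAt (fun y => f y * f (-y)) (f' x * f (-x) - f x * f' (-x)) x := by
  rw [sub_eq_add_neg, ← mul_neg]
  exact hx.mul (hasDerivAt_comp_neg hnx)

theorem eventually_deriv_mul_comp_neg_eq_zero (hrefl : ∀ᶠ x in 𝓝 0, f x * f (-x) = 1)
    (hf : ∀ᶠ x in 𝓝 0, HasDerivAt f (f' x) x) :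
    ∀ᶠ x in 𝓝 0, f' x * f (-x) - f x * f' (-x) = 0 := by
  have hnf : ∀ᶠ x in 𝓝 (0 : 𝕜), HasDerivAt f (f' (-x)) (-x) :=
    (continuous_neg.tendsto' 0 0 neg_zero).eventually hf
  filter_upwards [hf, hnf, eventually_eventually_nhds.mpr hrefl] with x hx hnx hconst
  exact (hasDerivAt_mul_comp_neg hx hnx).unique
    ((hasDerivAt_const x (1 : 𝕜)).congr_of_eventuallyEq hconst)

theorem sq_deriv_eq_mul_deriv_deriv_of_mul_comp_neg_eq_one [CharZero 𝕜]
    (hrefl : ∀ᶠ x in 𝓝 0, f x * f (-x) = 1) (hf : ∀ᶠ x in 𝓝 0, HasDerivAt f (f' x) x)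
    (hf' : HasDerivAt f' (f'' 0) 0) :
    f' 0 ^ 2 = f 0 * f'' 0 := by
  have hnf : HasDerivAt (fun y => f (-y)) (-f' 0) 0 :=
    hasDerivAt_comp_neg (by simpa using hf.self_of_nhds)
  have hnf' : HasDerivAt (fun y => f' (-y)) (-f'' 0) 0 := hasDerivAt_comp_neg (by simpa using hf')
  have hD := ((hf'.mul hnf).sub (hf.self_of_nhds.mul hnf')).unique
    ((hasDerivAt_const (0 : 𝕜) (0 : 𝕜)).congr_of_eventuallyEq
      (eventually_deriv_mul_comp_neg_eq_zero hrefl hf))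
  simp only [neg_zero] at hD
  linear_combination -hD / 2

end Reflection

namespace PadicInt

variable {p : ℕ} [Fact p.Prime] {Γ : ℚ_[p] → ℚ_[p]}

theorem norm_gamma_mul_sub_le (hp : Odd p)
    (hcont : ContinuousOn Γ {y : ℚ_[p] | ‖y‖ ≤ 1}) (hnat : ∀ k : ℕ, Γ k = gammaPNat p k)
    (a c : ℤ_[p]) :
    ‖Γ (p * a : ℤ_[p]) * Γ (p * c : ℤ_[p]) - Γ (p * (a + c) : ℤ_[p])‖ ≤
      ‖(p * (a + c) : ℤ_[p])‖ := by
  have hγ : Continuous fun z : ℤ_[p] => Γ z := hcont.comp_continuous continuous_subtype_val (·.2)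
  refine denseRange_natCast.induction_on₂
    (isClosed_le (((hγ.comp (by fun_prop)).mul (hγ.comp (by fun_prop))).sub
      (hγ.comp (by fun_prop))).norm (by fun_prop)) (fun a c => ?_) a c
  obtain ⟨k, hk⟩ := gammaPNat.dvd_mul_sub hp a c
  simp only [← Nat.cast_mul, ← Nat.cast_add, coe_natCast, hnat, ← Int.cast_mul, ← Int.cast_sub,
    hk]
  rw [Int.cast_mul, norm_mul, Int.cast_natCast, norm_def, coe_natCast]
  exact mul_le_of_le_one_right (norm_nonneg _) (Padic.norm_int_le_one k)

theorem gamma_mul_gamma_neg_eq_one (hp : Odd p)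
    (hcont : ContinuousOn Γ {y : ℚ_[p] | ‖y‖ ≤ 1}) (hnat : ∀ k : ℕ, Γ k = gammaPNat p k)
    (z : ℤ_[p]) :
    Γ (p * z : ℤ_[p]) * Γ (-(p * z : ℤ_[p])) = 1 := by
  have h := norm_gamma_mul_sub_le hp hcont hnat z (-z)
  rw [add_neg_cancel, mul_zero, norm_zero, norm_le_zero_iff, sub_eq_zero, mul_neg] at h
  have hΓ0 : Γ 0 = 1 := by simpa using hnat 0
  simpa [hΓ0] using h

end PadicInt

theorem Padic.eventually_gamma_mul_gamma_neg_eq_one {p : ℕ} [Fact p.Prime]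
    {Γ : ℚ_[p] → ℚ_[p]} (hp : Odd p) (hcont : ContinuousOn Γ {y : ℚ_[p] | ‖y‖ ≤ 1})
    (hnat : ∀ k : ℕ, Γ k = gammaPNat p k) :
    ∀ᶠ x in 𝓝 (0 : ℚ_[p]), Γ x * Γ (-x) = 1 := by
  have hball : {y : ℚ_[p] | ‖y‖ ≤ 1} ∈ 𝓝 0 := by
    simpa only [Metric.closedBall, dist_zero_right] using
      Metric.closedBall_mem_nhds (0 : ℚ_[p]) one_pos
  have hdiv : ∀ᶠ x : ℚ_[p] in 𝓝 0, ‖x / (p : ℚ_[p])‖ ≤ 1 :=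
    ((continuous_id.div_const _).tendsto' 0 0 (zero_div _)).eventually hball
  filter_upwards [hdiv] with x hx
  let z : ℤ_[p] := ⟨x / p, hx⟩
  have hz : ((p * z : ℤ_[p]) : ℚ_[p]) = x := by
    rw [PadicInt.coe_mul, PadicInt.coe_natCast]
    exact mul_div_cancel₀ x (Nat.cast_ne_zero.mpr (Fact.out : p.Prime).ne_zero)
  simpa only [hz] using PadicInt.gamma_mul_gamma_neg_eq_one hp hcont hnat z

/-- `Γ_p′(0)² = Γ_p″(0)`, i.e. `(log_p Γ_p)″(0) = 0`.
`Γ` is the Morita `p`-adic Gamma function, characterized as interpolating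
`gammaPNat p` on `ℕ`, with first and second derivatives `Γ'`, `Γ''` on the
unit ball of `ℚ_p`. -/
theorem padic_gamma_deriv_zero_sq (p : ℕ) [Fact p.Prime] (hp : 2 < p)
    (Γ Γ' Γ'' : ℚ_[p] → ℚ_[p])
    (hΓnat : ∀ k : ℕ, Γ (k : ℚ_[p]) = (gammaPNat p k : ℚ_[p]))
    (hΓderiv : ∀ y ∈ {y : ℚ_[p] | ‖y‖ ≤ 1},
      HasDerivWithinAt Γ (Γ' y) {y : ℚ_[p] | ‖y‖ ≤ 1} y)
    (hΓderiv2 : ∀ y ∈ {y : ℚ_[p] | ‖y‖ ≤ 1},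
      HasDerivWithinAt Γ' (Γ'' y) {y : ℚ_[p] | ‖y‖ ≤ 1} y) :
    Γ' 0 ^ 2 = Γ'' 0 := by
  have hball : IsOpen {y : ℚ_[p] | ‖y‖ ≤ 1} := by
    simpa only [Metric.closedBall, dist_zero_right] using
      IsUltrametricDist.isOpen_closedBall (0 : ℚ_[p]) one_ne_zero
  have h0 : (0 : ℚ_[p]) ∈ {y : ℚ_[p] | ‖y‖ ≤ 1} := by simp
  have hderiv : ∀ᶠ x in 𝓝 (0 : ℚ_[p]), HasDerivAt Γ (Γ' x) x := by
    filter_upwards [hball.mem_nhds h0] with x hx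
    exact (hΓderiv x hx).hasDerivAt (hball.mem_nhds hx)
  have hrefl := Padic.eventually_gamma_mul_gamma_neg_eq_one
    ((Fact.out : p.Prime).odd_of_ne_two hp.ne') (fun y hy => (hΓderiv y hy).continuousWithinAt)
    hΓnat
  have hΓ0 : Γ 0 = 1 := by simpa using hΓnat 0
  simpa [hΓ0] using sq_deriv_eq_mul_deriv_deriv_of_mul_comp_neg_eq_one hrefl hderiv
    ((hΓderiv2 0 h0).hasDerivAt (hball.mem_nhds h0))
end
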